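/- arXiv:1105.4865 — 4 statements merged into one kernel-verified Lean document; each statement's English description precedes it below -/
import Mathlib

section
/- Maassen–Uffink uncertainty relation: for any unit vector |ψ⟩ ∈ C^d and orthonormal bases v, w of C^d, H(v) + H(w) ≥ -log r(v,w), where H(v) = -Σ_j |⟨v_j|ψ⟩|² log|⟨v_j|ψ⟩|², H(w) is defined analogously, and r(v,w) = max_{j,k} |⟨v_j|w_k⟩|². -/
open scoped InnerProductSpace

open Finset in
/-- Discrete Cauchy–Schwarz for complex sums. -/
lemma MU_cs_sum {d : ℕ} (x y : Fin d → ℂ) :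
    ‖∑ k, x k * y k‖ ≤ Real.sqrt (∑ k, ‖x k‖ ^ 2) * Real.sqrt (∑ k, ‖y k‖ ^ 2) := by
  have h1 : ‖∑ k, x k * y k‖ ≤ ∑ k, ‖x k‖ * ‖y k‖ := by
    refine (norm_sum_le _ _).trans ?_
    refine Finset.sum_le_sum fun i _ => le_of_eq (norm_mul _ _)
  refine h1.trans ?_
  have h2 := Finset.sum_mul_sq_le_sq_mul_sq Finset.univ (fun k => ‖x k‖) (fun k => ‖y k‖)
  have hnn : 0 ≤ ∑ k, ‖x k‖ * ‖y k‖ :=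
    Finset.sum_nonneg fun _ _ => mul_nonneg (norm_nonneg _) (norm_nonneg _)
  calc ∑ k, ‖x k‖ * ‖y k‖ = Real.sqrt ((∑ k, ‖x k‖ * ‖y k‖) ^ 2) := (Real.sqrt_sq hnn).symm
    _ ≤ Real.sqrt ((∑ k, ‖x k‖ ^ 2) * ∑ k, ‖y k‖ ^ 2) := Real.sqrt_le_sqrt h2
    _ = _ := Real.sqrt_mul (Finset.sum_nonneg fun _ _ => sq_nonneg _) _

lemma MU_norm_exp_ofReal_mul (w : ℝ) (z : ℂ) :
    ‖Complex.exp ((w : ℂ) * z)‖ = Real.exp (w * z.re) := by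
  rw [Complex.norm_exp]
  congr 1
  simp [Complex.mul_re]

lemma MU_rpow_sq {x : ℝ} (hx : 0 ≤ x) (e : ℝ) : (x ^ e) ^ (2 : ℕ) = x ^ (e * 2) := by
  rw [← Real.rpow_natCast (x ^ e) 2, ← Real.rpow_mul hx]
  norm_num

/-- Parseval for orthonormal bases of Euclidean space. -/
lemma MU_parseval {d : ℕ} (b : OrthonormalBasis (Fin d) ℂ (EuclideanSpace ℂ (Fin d)))
    (x : EuclideanSpace ℂ (Fin d)) : ∑ i, ‖(⟪b i, x⟫_ℂ : ℂ)‖ ^ 2 = ‖x‖ ^ 2 := by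
  have h : ‖b.repr x‖ = ‖x‖ := b.repr.norm_map x
  have h2 : ‖b.repr x‖ ^ 2 = ∑ i, ‖b.repr x i‖ ^ 2 := by
    rw [EuclideanSpace.norm_eq]
    rw [Real.sq_sqrt (Finset.sum_nonneg fun _ _ => sq_nonneg _)]
  calc ∑ i, ‖(⟪b i, x⟫_ℂ : ℂ)‖ ^ 2 = ∑ i, ‖b.repr x i‖ ^ 2 := by
        refine Finset.sum_congr rfl fun i _ => ?_
        rw [b.repr_apply_apply]
    _ = ‖x‖ ^ 2 := by rw [← h2, h]

set_option maxHeartbeats 1000000 in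
theorem MU_rt_step {d : ℕ} (a b : Fin d → ℂ) (U : Fin d → Fin d → ℂ) (c t : ℝ)
    (hc : 0 < c) (hc1 : c ≤ 1)
    (hU : ∀ k j, ‖U k j‖ ^ 2 ≤ c)
    (hiso : ∀ A : Fin d → ℂ, ∑ k, ‖∑ j, U k j * A j‖ ^ 2 = ∑ j, ‖A j‖ ^ 2)
    (hb : ∀ k, b k = ∑ j, U k j * a j)
    (ha2 : ∑ j, ‖a j‖ ^ 2 = 1) (hb2 : ∑ k, ‖b k‖ ^ 2 = 1)
    (ht : 0 < t) (ht1 : t < 1) :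
    (∑ k, ‖b k‖ ^ (2 / (1 - t))) ^ ((1 - t) / 2) ≤
      c ^ (t / 2) * (∑ j, ‖a j‖ ^ (2 / (1 + t))) ^ ((1 + t) / 2) := by
  classical
  have h1t : (0:ℝ) < 1 + t := by linarith
  have h1t' : (0:ℝ) < 1 - t := by linarith
  set p : ℝ := 2 / (1 + t) with hp_def
  set q : ℝ := 2 / (1 - t) with hq_def
  have hp : 0 < p := div_pos two_pos h1t
  have hq : 0 < q := div_pos two_pos h1t'
  have hpt : p / 2 * (1 + t) = 1 := by rw [hp_def]; field_simp
  have hqt : q / 2 * (1 + t) = q - 1 := by rw [hq_def]; field_simp; ring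
  set SA : ℝ := ∑ j, ‖a j‖ ^ p with hSA_def
  set SB : ℝ := ∑ k, ‖b k‖ ^ q with hSB_def
  have hSAnn : ∀ j : Fin d, (0:ℝ) ≤ ‖a j‖ ^ p := fun j => Real.rpow_nonneg (norm_nonneg _) _
  have hSBnn : ∀ k : Fin d, (0:ℝ) ≤ ‖b k‖ ^ q := fun k => Real.rpow_nonneg (norm_nonneg _) _
  obtain ⟨j0, hj0⟩ : ∃ j, a j ≠ 0 := by
    by_contra h; push_neg at h; simp [h] at ha2
  obtain ⟨k0, hk0⟩ : ∃ k, b k ≠ 0 := by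
    by_contra h; push_neg at h; simp [h] at hb2
  have hSA : 0 < SA := lt_of_lt_of_le (Real.rpow_pos_of_pos (norm_pos_iff.mpr hj0) p)
    (by rw [hSA_def]; exact Finset.single_le_sum (fun j _ => hSAnn j) (Finset.mem_univ j0))
  have hSB : 0 < SB := lt_of_lt_of_le (Real.rpow_pos_of_pos (norm_pos_iff.mpr hk0) q)
    (by rw [hSB_def]; exact Finset.single_le_sum (fun k _ => hSBnn k) (Finset.mem_univ k0))
  set Na : ℝ := SA ^ (1/p) with hNa_def
  set Nb : ℝ := SB ^ (1/q) with hNb_def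
  have hNa : 0 < Na := Real.rpow_pos_of_pos hSA _
  have hNb : 0 < Nb := Real.rpow_pos_of_pos hSB _
  have hNap : Na ^ p = SA := by
    rw [hNa_def, ← Real.rpow_mul hSA.le, one_div, inv_mul_cancel₀ hp.ne', Real.rpow_one]
  have hNbq : Nb ^ q = SB := by
    rw [hNb_def, ← Real.rpow_mul hSB.le, one_div, inv_mul_cancel₀ hq.ne', Real.rpow_one]
  set r : Fin d → ℝ := fun j => ‖a j‖ / Na with hr_def
  set s : Fin d → ℝ := fun k => ‖b k‖ / Nb with hs_def
  have hr0 : ∀ j, 0 ≤ r j := fun j => div_nonneg (norm_nonneg _) hNa.le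
  have hs0 : ∀ k, 0 ≤ s k := fun k => div_nonneg (norm_nonneg _) hNb.le
  have hrp : ∀ j, r j ^ p = ‖a j‖ ^ p / SA := fun j => by
    rw [hr_def]; rw [Real.div_rpow (norm_nonneg _) hNa.le, hNap]
  have hsq : ∀ k, s k ^ q = ‖b k‖ ^ q / SB := fun k => by
    rw [hs_def]; rw [Real.div_rpow (norm_nonneg _) hNb.le, hNbq]
  have hrsum : ∑ j, r j ^ p = 1 := by
    simp only [hrp]; rw [← Finset.sum_div, ← hSA_def]; exact div_self hSA.ne'
  have hssum : ∑ k, s k ^ q = 1 := by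
    simp only [hsq]; rw [← Finset.sum_div, ← hSB_def]; exact div_self hSB.ne'
  have hr1 : ∀ j, r j ≤ 1 := by
    intro j
    by_contra hcon
    push_neg at hcon
    have h2 : (1:ℝ) < r j ^ p := by
      calc (1:ℝ) = 1 ^ p := (Real.one_rpow p).symm
        _ < r j ^ p := Real.rpow_lt_rpow (by norm_num) hcon hp
    have h3 : r j ^ p ≤ 1 := by
      rw [hrp j, div_le_one hSA, hSA_def]
      exact Finset.single_le_sum (fun i _ => hSAnn i) (Finset.mem_univ j)
    linarith
  have hs1 : ∀ k, s k ≤ 1 := by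
    intro k
    by_contra hcon
    push_neg at hcon
    have h2 : (1:ℝ) < s k ^ q := by
      calc (1:ℝ) = 1 ^ q := (Real.one_rpow q).symm
        _ < s k ^ q := Real.rpow_lt_rpow (by norm_num) hcon hq
    have h3 : s k ^ q ≤ 1 := by
      rw [hsq k, div_le_one hSB, hSB_def]
      exact Finset.single_le_sum (fun i _ => hSBnn i) (Finset.mem_univ k)
    linarith
  -- phases and analytic families
  set φ : Fin d → ℂ := fun j => if a j = 0 then 0 else a j / (‖a j‖ : ℂ) with hφ_def
  set θ : Fin d → ℂ := fun k => if b k = 0 then 0 else (starRingEnd ℂ) (b k) / (‖b k‖ : ℂ)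
    with hθ_def
  set A : Fin d → ℂ → ℂ :=
    fun j z => φ j * Complex.exp (((p/2 * Real.log (r j) : ℝ) : ℂ) * (1 + z)) with hA_def
  set B : Fin d → ℂ → ℂ :=
    fun k z => θ k * Complex.exp (((q/2 * Real.log (s k) : ℝ) : ℂ) * (1 + z)) with hB_def
  set G : ℂ → ℂ := fun z => Complex.exp (((-Real.log c / 2 : ℝ) : ℂ) * z) *
    ∑ k, B k z * ∑ j, U k j * A j z with hG_def
  have hφnorm : ∀ j, a j ≠ 0 → ‖φ j‖ = 1 := by
    intro j hj
    rw [hφ_def]; simp only [if_neg hj]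
    rw [norm_div, Complex.norm_real, Real.norm_eq_abs, abs_of_nonneg (norm_nonneg _)]
    exact div_self (norm_ne_zero_iff.mpr hj)
  have hθnorm : ∀ k, b k ≠ 0 → ‖θ k‖ = 1 := by
    intro k hk
    rw [hθ_def]; simp only [if_neg hk]
    rw [norm_div, Complex.norm_real, Real.norm_eq_abs, abs_of_nonneg (norm_nonneg _),
      RCLike.norm_conj]
    exact div_self (norm_ne_zero_iff.mpr hk)
  have hrpos : ∀ j, a j ≠ 0 → 0 < r j := fun j hj => div_pos (norm_pos_iff.mpr hj) hNa
  have hspos : ∀ k, b k ≠ 0 → 0 < s k := fun k hk => div_pos (norm_pos_iff.mpr hk) hNb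
  have hAnorm : ∀ (j : Fin d) (z : ℂ), 0 ≤ z.re → ‖A j z‖ = r j ^ (p/2 * (1 + z.re)) := by
    intro j z hz
    by_cases hj : a j = 0
    · have hrj : r j = 0 := by rw [hr_def]; simp [hj]
      rw [hA_def]; simp only [hφ_def, if_pos hj, zero_mul, norm_zero]
      rw [hrj, Real.zero_rpow]
      exact (mul_pos (by linarith) (by linarith)).ne'
    · rw [hA_def]; simp only
      rw [norm_mul, hφnorm j hj, one_mul, MU_norm_exp_ofReal_mul]
      rw [Complex.add_re, Complex.one_re]
      rw [Real.rpow_def_of_pos (hrpos j hj)]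
      congr 1
      ring
  have hBnorm : ∀ (k : Fin d) (z : ℂ), 0 ≤ z.re → ‖B k z‖ = s k ^ (q/2 * (1 + z.re)) := by
    intro k z hz
    by_cases hk : b k = 0
    · have hsk : s k = 0 := by rw [hs_def]; simp [hk]
      rw [hB_def]; simp only [hθ_def, if_pos hk, zero_mul, norm_zero]
      rw [hsk, Real.zero_rpow]
      exact (mul_pos (by linarith) (by linarith)).ne'
    · rw [hB_def]; simp only
      rw [norm_mul, hθnorm k hk, one_mul, MU_norm_exp_ofReal_mul]
      rw [Complex.add_re, Complex.one_re]
      rw [Real.rpow_def_of_pos (hspos k hk)]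
      congr 1
      ring
  -- boundary Re = 0
  have hbd0 : ∀ z ∈ Complex.re ⁻¹' {(0:ℝ)}, ‖G z‖ ≤ 1 := by
    intro z hz
    have hz0 : z.re = 0 := hz
    rw [hG_def]; simp only
    rw [norm_mul, MU_norm_exp_ofReal_mul, hz0, mul_zero, Real.exp_zero, one_mul]
    have hcs := MU_cs_sum (fun k => B k z) (fun k => ∑ j, U k j * A j z)
    refine hcs.trans (le_of_eq ?_)
    have hBsq : ∑ k, ‖B k z‖ ^ 2 = 1 := by
      have hterm : ∀ k : Fin d, ‖B k z‖ ^ 2 = s k ^ q := by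
        intro k
        rw [hBnorm k z (le_of_eq hz0.symm), hz0, MU_rpow_sq (hs0 k)]
        congr 1
        ring
      rw [Finset.sum_congr rfl fun k _ => hterm k, hssum]
    have hAsq : ∑ j, ‖A j z‖ ^ 2 = 1 := by
      have hterm : ∀ j : Fin d, ‖A j z‖ ^ 2 = r j ^ p := by
        intro j
        rw [hAnorm j z (le_of_eq hz0.symm), hz0, MU_rpow_sq (hr0 j)]
        congr 1
        ring
      rw [Finset.sum_congr rfl fun j _ => hterm j, hrsum]
    have hCsq : ∑ k, ‖∑ j, U k j * A j z‖ ^ 2 = 1 := by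
      rw [hiso (fun j => A j z)]
      exact hAsq
    rw [hBsq, hCsq, Real.sqrt_one, mul_one]
  -- boundary Re = 1
  have hbd1 : ∀ z ∈ Complex.re ⁻¹' {(1:ℝ)}, ‖G z‖ ≤ 1 := by
    intro z hz
    have hz1 : z.re = 1 := hz
    rw [hG_def]; simp only
    rw [norm_mul, MU_norm_exp_ofReal_mul, hz1, mul_one]
    have hUc : ∀ k j, ‖U k j‖ ≤ Real.sqrt c := fun k j =>
      (Real.le_sqrt (norm_nonneg _) hc.le).mpr (hU k j)
    have hA1 : ∀ j, ‖A j z‖ = r j ^ p := by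
      intro j
      rw [hAnorm j z (by rw [hz1]; norm_num), hz1]
      congr 1
      ring
    have hB1 : ∀ k, ‖B k z‖ = s k ^ q := by
      intro k
      rw [hBnorm k z (by rw [hz1]; norm_num), hz1]
      congr 1
      ring
    have hC : ∀ k, ‖∑ j, U k j * A j z‖ ≤ Real.sqrt c := by
      intro k
      calc ‖∑ j, U k j * A j z‖ ≤ ∑ j, ‖U k j‖ * ‖A j z‖ := by
            refine (norm_sum_le _ _).trans ?_
            exact Finset.sum_le_sum fun j _ => le_of_eq (norm_mul _ _)
        _ ≤ ∑ j, Real.sqrt c * (r j ^ p) := by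
            refine Finset.sum_le_sum fun j _ => ?_
            rw [hA1 j]
            exact mul_le_mul_of_nonneg_right (hUc k j) (Real.rpow_nonneg (hr0 j) _)
        _ = Real.sqrt c := by rw [← Finset.mul_sum, hrsum, mul_one]
    have hsum : ‖∑ k, B k z * ∑ j, U k j * A j z‖ ≤ Real.sqrt c := by
      calc ‖∑ k, B k z * ∑ j, U k j * A j z‖ ≤ ∑ k, ‖B k z‖ * ‖∑ j, U k j * A j z‖ := by
            refine (norm_sum_le _ _).trans ?_
            exact Finset.sum_le_sum fun k _ => le_of_eq (norm_mul _ _)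
        _ ≤ ∑ k, (s k ^ q) * Real.sqrt c := by
            refine Finset.sum_le_sum fun k _ => ?_
            rw [hB1 k]
            exact mul_le_mul_of_nonneg_left (hC k) (Real.rpow_nonneg (hs0 k) _)
        _ = Real.sqrt c := by rw [← Finset.sum_mul, hssum, one_mul]
    have hone : Real.exp (-Real.log c / 2) * Real.sqrt c = 1 := by
      rw [show Real.sqrt c = Real.exp (Real.log c * (1/2)) by
        rw [← Real.rpow_def_of_pos hc, ← Real.sqrt_eq_rpow]]
      rw [← Real.exp_add]
      rw [show -Real.log c / 2 + Real.log c * (1 / 2) = 0 by ring, Real.exp_zero]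
    calc Real.exp (-Real.log c / 2) * ‖∑ k, B k z * ∑ j, U k j * A j z‖
        ≤ Real.exp (-Real.log c / 2) * Real.sqrt c :=
          mul_le_mul_of_nonneg_left hsum (Real.exp_pos _).le
      _ = 1 := hone
  -- boundedness on the closed strip
  have hbdd : BddAbove ((norm ∘ G) '' (Complex.HadamardThreeLines.verticalClosedStrip 0 1)) := by
    refine ⟨Real.exp (-Real.log c / 2) * ((d:ℝ) * (d:ℝ)), ?_⟩
    rintro m ⟨z, hzs, rfl⟩
    have hz0 : 0 ≤ z.re := hzs.1
    have hz1 : z.re ≤ 1 := hzs.2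
    have hlogc : Real.log c ≤ 0 := Real.log_nonpos hc.le hc1
    simp only [Function.comp_apply]
    rw [hG_def]; simp only
    rw [norm_mul, MU_norm_exp_ofReal_mul]
    have hexp : Real.exp (-Real.log c / 2 * z.re) ≤ Real.exp (-Real.log c / 2) := by
      apply Real.exp_le_exp.mpr
      exact mul_le_of_le_one_right (by linarith) hz1
    have hU1 : ∀ k j, ‖U k j‖ ≤ 1 := by
      intro k j
      exact (pow_le_one_iff_of_nonneg (norm_nonneg _) two_ne_zero).mp
        (le_trans (hU k j) hc1)
    have hA1 : ∀ j, ‖A j z‖ ≤ 1 := by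
      intro j
      rw [hAnorm j z hz0]
      exact Real.rpow_le_one (hr0 j) (hr1 j) (mul_nonneg (by linarith) (by linarith))
    have hB1 : ∀ k, ‖B k z‖ ≤ 1 := by
      intro k
      rw [hBnorm k z hz0]
      exact Real.rpow_le_one (hs0 k) (hs1 k) (mul_nonneg (by linarith) (by linarith))
    have hC : ∀ k, ‖∑ j, U k j * A j z‖ ≤ (d:ℝ) := by
      intro k
      calc ‖∑ j, U k j * A j z‖ ≤ ∑ j, ‖U k j‖ * ‖A j z‖ := by
            refine (norm_sum_le _ _).trans ?_
            exact Finset.sum_le_sum fun j _ => le_of_eq (norm_mul _ _)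
        _ ≤ ∑ _j : Fin d, (1:ℝ) := by
            refine Finset.sum_le_sum fun j _ => ?_
            exact mul_le_one₀ (hU1 k j) (norm_nonneg _) (hA1 j)
        _ = (d:ℝ) := by simp
    have hsum : ‖∑ k, B k z * ∑ j, U k j * A j z‖ ≤ (d:ℝ) * (d:ℝ) := by
      calc ‖∑ k, B k z * ∑ j, U k j * A j z‖ ≤ ∑ k, ‖B k z‖ * ‖∑ j, U k j * A j z‖ := by
            refine (norm_sum_le _ _).trans ?_
            exact Finset.sum_le_sum fun k _ => le_of_eq (norm_mul _ _)
        _ ≤ ∑ _k : Fin d, (d:ℝ) := by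
            refine Finset.sum_le_sum fun k _ => ?_
            calc ‖B k z‖ * ‖∑ j, U k j * A j z‖ ≤ 1 * (d:ℝ) :=
                mul_le_mul (hB1 k) (hC k) (norm_nonneg _) one_pos.le
              _ = (d:ℝ) := one_mul _
        _ = (d:ℝ) * (d:ℝ) := by simp [mul_comm]
    exact mul_le_mul hexp hsum (norm_nonneg _) (Real.exp_pos _).le
  -- differentiability
  have hGdiff : Differentiable ℂ G := by
    rw [hG_def]
    apply Differentiable.mul
    · exact (differentiable_id.const_mul _).cexp
    · apply Differentiable.fun_sum
      intro k _
      apply Differentiable.mul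
      · rw [hB_def]
        exact (differentiable_const _).mul
          (((differentiable_const _).mul ((differentiable_const 1).add differentiable_id)).cexp)
      · apply Differentiable.fun_sum
        intro j _
        apply Differentiable.const_mul
        rw [hA_def]
        exact (differentiable_const _).mul
          (((differentiable_const _).mul ((differentiable_const 1).add differentiable_id)).cexp)
  -- three lines theorem
  have hmem : (t:ℂ) ∈ Complex.HadamardThreeLines.verticalClosedStrip 0 1 := by
    simp only [Complex.HadamardThreeLines.verticalClosedStrip, Set.mem_preimage,
      Complex.ofReal_re, Set.mem_Icc]
    exact ⟨ht.le, ht1.le⟩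
  have h3l := Complex.HadamardThreeLines.norm_le_interp_of_mem_verticalClosedStrip' (f := G) zero_lt_one hmem
    hGdiff.diffContOnCl hbdd hbd0 hbd1
  have hGt : ‖G (t:ℂ)‖ ≤ 1 := by
    refine h3l.trans (le_of_eq ?_)
    rw [Real.one_rpow, Real.one_rpow, mul_one]
  -- value at t
  have hAt : ∀ j, A j (t:ℂ) = a j / (Na : ℂ) := by
    intro j
    by_cases hj : a j = 0
    · rw [hA_def]; simp [hφ_def, hj]
    · rw [hA_def]; simp only [hφ_def, if_neg hj]
      have h1 : ((p/2 * Real.log (r j) : ℝ) : ℂ) * (1 + (t:ℂ))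
          = ((p/2 * Real.log (r j) * (1+t) : ℝ) : ℂ) := by push_cast; ring
      rw [h1, ← Complex.ofReal_exp]
      have h2 : p/2 * Real.log (r j) * (1+t) = Real.log (r j) := by
        rw [mul_comm (p/2) (Real.log (r j)), mul_assoc, hpt, mul_one]
      rw [h2, Real.exp_log (hrpos j hj), hr_def]
      have hna : (Na:ℂ) ≠ 0 := Complex.ofReal_ne_zero.mpr hNa.ne'
      have hnaj : ((‖a j‖:ℝ):ℂ) ≠ 0 := Complex.ofReal_ne_zero.mpr (norm_ne_zero_iff.mpr hj)
      push_cast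
      field_simp
  have hCt : ∀ k, (∑ j, U k j * A j (t:ℂ)) = b k / (Na:ℂ) := by
    intro k
    rw [hb k]
    simp only [hAt, div_eq_mul_inv]
    rw [Finset.sum_mul]
    exact Finset.sum_congr rfl fun j _ => by ring
  have hterm : ∀ k, B k (t:ℂ) * (∑ j, U k j * A j (t:ℂ)) = ((Nb * s k ^ q / Na : ℝ) : ℂ) := by
    intro k
    rw [hCt k]
    by_cases hk : b k = 0
    · rw [hB_def]
      simp only [hθ_def, if_pos hk, zero_mul, hk, zero_div, mul_zero]
      rw [show s k = 0 by rw [hs_def]; simp [hk], Real.zero_rpow hq.ne', mul_zero, zero_div,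
        Complex.ofReal_zero]
    · rw [hB_def]; simp only [hθ_def, if_neg hk]
      have h1 : ((q/2 * Real.log (s k) : ℝ) : ℂ) * (1 + (t:ℂ))
          = ((Real.log (s k) * (q - 1) : ℝ) : ℂ) := by
        have h2 : q/2 * Real.log (s k) * (1+t) = Real.log (s k) * (q-1) := by
          rw [mul_comm (q/2) (Real.log (s k)), mul_assoc, hqt]
        push_cast [← h2]
        ring
      rw [h1, ← Complex.ofReal_exp, show Real.exp (Real.log (s k) * (q-1)) = s k ^ (q-1) from
        (Real.rpow_def_of_pos (hspos k hk) _).symm]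
      have hbk : ((‖b k‖:ℝ):ℂ) ≠ 0 := Complex.ofReal_ne_zero.mpr (norm_ne_zero_iff.mpr hk)
      have hna : (Na:ℂ) ≠ 0 := Complex.ofReal_ne_zero.mpr hNa.ne'
      have hconj : (starRingEnd ℂ) (b k) * b k = ((‖b k‖ ^ 2 : ℝ) : ℂ) := by
        rw [mul_comm, Complex.mul_conj']
        push_cast
        ring
      have hsnb : ‖b k‖ = s k * Nb := by
        rw [hs_def]; exact (div_mul_cancel₀ _ hNb.ne').symm
      have h5 : s k ^ (q-1) * s k = s k ^ q := by
        rw [← Real.rpow_add_one (hspos k hk).ne' (q-1), sub_add_cancel]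
      calc (starRingEnd ℂ) (b k) / (↑‖b k‖ : ℂ) * ↑(s k ^ (q-1)) * (b k / (↑Na : ℂ))
          = ((starRingEnd ℂ) (b k) * b k) * ↑(s k ^ (q-1)) / ((↑‖b k‖ : ℂ) * ↑Na) := by ring
        _ = ((‖b k‖^2 : ℝ):ℂ) * ↑(s k ^ (q-1)) / ((↑‖b k‖ : ℂ) * ↑Na) := by rw [hconj]
        _ = (((‖b k‖^2 * s k ^ (q-1)) / (‖b k‖ * Na) : ℝ) : ℂ) := by push_cast; ring
        _ = ((Nb * s k ^ q / Na : ℝ) : ℂ) := by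
            congr 1
            rw [← h5, hsnb]
            have hXgen : ∀ X σ : ℝ, σ ≠ 0 →
                (σ*Nb)^2 * X / ((σ*Nb)*Na) = Nb*(X*σ)/Na := by
              intro X σ hσ'
              field_simp
            exact hXgen _ _ (hspos k hk).ne'
  have hGt_val : G (t:ℂ) = ((Real.exp (-Real.log c/2 * t) * (Nb / Na) : ℝ) : ℂ) := by
    rw [hG_def]; simp only
    rw [Finset.sum_congr rfl fun k _ => hterm k]
    have hsum2 : ∑ k, ((Nb * s k ^ q / Na : ℝ) : ℂ) = ((Nb / Na : ℝ) : ℂ) := by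
      rw [← Complex.ofReal_sum]
      congr 1
      rw [← Finset.sum_div, ← Finset.mul_sum, hssum, mul_one]
    rw [hsum2]
    have hexpt : Complex.exp (((-Real.log c / 2 : ℝ) : ℂ) * (t:ℂ))
        = ((Real.exp (-Real.log c/2 * t) : ℝ) : ℂ) := by
      rw [← Complex.ofReal_mul, Complex.ofReal_exp]
    rw [hexpt, ← Complex.ofReal_mul]
  have hnormGt : ‖G (t:ℂ)‖ = Real.exp (-Real.log c/2 * t) * (Nb/Na) := by
    rw [hGt_val, Complex.norm_real, Real.norm_eq_abs, abs_of_nonneg]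
    positivity
  have hfinal : Nb ≤ c ^ (t/2) * Na := by
    have h := hGt
    rw [hnormGt] at h
    have hstep : Nb / Na ≤ Real.exp (Real.log c * (t/2)) := by
      have hcalc : Nb / Na
          = Real.exp (-(-Real.log c/2*t)) * (Real.exp (-Real.log c/2*t) * (Nb/Na)) := by
        rw [← mul_assoc, ← Real.exp_add]
        simp
      rw [hcalc]
      calc Real.exp (-(-Real.log c/2*t)) * (Real.exp (-Real.log c/2*t) * (Nb/Na))
          ≤ Real.exp (-(-Real.log c/2*t)) * 1 :=
            mul_le_mul_of_nonneg_left h (Real.exp_pos _).le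
        _ = Real.exp (Real.log c * (t/2)) := by rw [mul_one]; congr 1; ring
    rw [Real.rpow_def_of_pos hc]
    exact (div_le_iff₀ hNa).mp hstep
  have hq2 : (1-t)/2 = 1/q := by rw [hq_def, one_div_div]
  have hp2 : (1+t)/2 = 1/p := by rw [hp_def, one_div_div]
  rw [hq2, hp2, ← hNa_def, ← hNb_def]
  exact hfinal

theorem MU_deriv_part {d : ℕ} (pv qw : Fin d → ℝ) (c : ℝ) (hc : 0 < c)
    (hp0 : ∀ j, 0 ≤ pv j) (hq0 : ∀ k, 0 ≤ qw k)
    (hp1 : ∑ j, pv j = 1) (hq1 : ∑ k, qw k = 1)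
    (key : ∀ t : ℝ, 0 < t → t < 1 →
      (∑ k, qw k ^ ((1 : ℝ) / (1 - t))) ^ ((1 - t) / 2) ≤
        c ^ (t / 2) * (∑ j, pv j ^ ((1 : ℝ) / (1 + t))) ^ ((1 + t) / 2)) :
    (-∑ j, pv j * Real.log (pv j)) + (-∑ k, qw k * Real.log (qw k)) ≥ -Real.log c := by
  classical
  set S : ℝ → ℝ := fun t => ∑ j, pv j ^ ((1 : ℝ) / (1 + t)) with hS_def
  set T : ℝ → ℝ := fun t => ∑ k, qw k ^ ((1 : ℝ) / (1 - t)) with hT_def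
  -- positivity of S, T on (-1, 1)
  have hSpos : ∀ t : ℝ, -1 < t → 0 < S t := by
    intro t htl
    have h1t : (0:ℝ) < 1 + t := by linarith
    obtain ⟨j0, hj0⟩ : ∃ j, 0 < pv j := by
      by_contra h
      push_neg at h
      have : ∀ j, pv j = 0 := fun j => le_antisymm (h j) (hp0 j)
      simp [this] at hp1
    have hterm : 0 < pv j0 ^ ((1:ℝ)/(1+t)) := Real.rpow_pos_of_pos hj0 _
    refine lt_of_lt_of_le hterm ?_
    exact Finset.single_le_sum (fun j _ => Real.rpow_nonneg (hp0 j) _) (Finset.mem_univ j0)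
  have hTpos : ∀ t : ℝ, t < 1 → 0 < T t := by
    intro t htl
    have h1t : (0:ℝ) < 1 - t := by linarith
    obtain ⟨k0, hk0⟩ : ∃ k, 0 < qw k := by
      by_contra h
      push_neg at h
      have : ∀ k, qw k = 0 := fun k => le_antisymm (h k) (hq0 k)
      simp [this] at hq1
    have hterm : 0 < qw k0 ^ ((1:ℝ)/(1-t)) := Real.rpow_pos_of_pos hk0 _
    refine lt_of_lt_of_le hterm ?_
    exact Finset.single_le_sum (fun k _ => Real.rpow_nonneg (hq0 k) _) (Finset.mem_univ k0)
  have hS0 : S 0 = 1 := by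
    rw [hS_def]
    simp only [add_zero, div_one, Real.rpow_one]
    exact hp1
  have hT0 : T 0 = 1 := by
    rw [hT_def]
    simp only [sub_zero, div_one, Real.rpow_one]
    exact hq1
  -- derivative of S at 0
  have hS' : HasDerivAt S (∑ j, -(pv j * Real.log (pv j))) 0 := by
    rw [hS_def]
    refine HasDerivAt.fun_sum fun j _ => ?_
    rcases eq_or_lt_of_le (hp0 j) with hj | hj
    · -- pv j = 0
      have hzero : (fun t : ℝ => pv j ^ ((1:ℝ)/(1+t))) =ᶠ[nhds (0:ℝ)] fun _ => (0:ℝ) := by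
        filter_upwards [Ioo_mem_nhds (show (-1:ℝ) < 0 by norm_num) (show (0:ℝ) < 1 by norm_num)]
          with t htm
        have h1t : (0:ℝ) < 1 + t := by linarith [htm.1]
        rw [← hj, Real.zero_rpow]
        positivity
      have : -(pv j * Real.log (pv j)) = 0 := by rw [← hj]; simp
      rw [this]
      exact (hasDerivAt_const (0:ℝ) (0:ℝ)).congr_of_eventuallyEq hzero
    · -- pv j > 0
      have hbase : HasDerivAt (fun t : ℝ => (1:ℝ)/(1+t)) (-1) 0 := by
        simp only [one_div]
        have h1 : HasDerivAt (fun t : ℝ => 1 + t) 1 0 := (hasDerivAt_id 0).const_add 1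
        have h2 := h1.inv (by norm_num)
        refine h2.congr_deriv ?_
        norm_num
      have hmul : HasDerivAt (fun t : ℝ => ((1:ℝ)/(1+t)) * Real.log (pv j))
          (-Real.log (pv j)) 0 := by
        simpa using hbase.mul_const (Real.log (pv j))
      have hexp := hmul.exp
      have heq : (fun t : ℝ => pv j ^ ((1:ℝ)/(1+t))) =
          fun t : ℝ => Real.exp (((1:ℝ)/(1+t)) * Real.log (pv j)) := by
        funext t
        rw [Real.rpow_def_of_pos hj, mul_comm]
      rw [heq]
      refine hexp.congr_deriv ?_
      have : ((1:ℝ)/(1+0)) * Real.log (pv j) = Real.log (pv j) := by norm_num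
      rw [this, Real.exp_log hj]
      ring
  -- derivative of T at 0
  have hT' : HasDerivAt T (∑ k, qw k * Real.log (qw k)) 0 := by
    rw [hT_def]
    refine HasDerivAt.fun_sum fun k _ => ?_
    rcases eq_or_lt_of_le (hq0 k) with hk | hk
    · have hzero : (fun t : ℝ => qw k ^ ((1:ℝ)/(1-t))) =ᶠ[nhds (0:ℝ)] fun _ => (0:ℝ) := by
        filter_upwards [Ioo_mem_nhds (show (-1:ℝ) < 0 by norm_num) (show (0:ℝ) < 1 by norm_num)]
          with t htm
        have h1t : (0:ℝ) < 1 - t := by linarith [htm.2]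
        rw [← hk, Real.zero_rpow]
        positivity
      have : qw k * Real.log (qw k) = 0 := by rw [← hk]; simp
      rw [this]
      exact (hasDerivAt_const (0:ℝ) (0:ℝ)).congr_of_eventuallyEq hzero
    · have hbase : HasDerivAt (fun t : ℝ => (1:ℝ)/(1-t)) 1 0 := by
        simp only [one_div]
        have h1 : HasDerivAt (fun t : ℝ => 1 - t) (-1) 0 := by
          exact (hasDerivAt_id (0:ℝ)).const_sub 1
        have h2 := h1.inv (by norm_num)
        refine h2.congr_deriv ?_
        norm_num
      have hmul : HasDerivAt (fun t : ℝ => ((1:ℝ)/(1-t)) * Real.log (qw k))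
          (Real.log (qw k)) 0 := by
        simpa using hbase.mul_const (Real.log (qw k))
      have hexp := hmul.exp
      have heq : (fun t : ℝ => qw k ^ ((1:ℝ)/(1-t))) =
          fun t : ℝ => Real.exp (((1:ℝ)/(1-t)) * Real.log (qw k)) := by
        funext t
        rw [Real.rpow_def_of_pos hk, mul_comm]
      rw [heq]
      refine hexp.congr_deriv ?_
      have : ((1:ℝ)/(1-0)) * Real.log (qw k) = Real.log (qw k) := by norm_num
      rw [this, Real.exp_log hk]
  -- Φ and its derivative
  set Φ : ℝ → ℝ := fun t => (t/2) * Real.log c + ((1+t)/2) * Real.log (S t)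
      - ((1-t)/2) * Real.log (T t) with hΦ_def
  have hΦ0 : Φ 0 = 0 := by
    rw [hΦ_def]
    simp [hS0, hT0]
  have hlogS : HasDerivAt (fun t => Real.log (S t))
      ((∑ j, -(pv j * Real.log (pv j))) / S 0) 0 := hS'.log (by rw [hS0]; norm_num)
  have hlogT : HasDerivAt (fun t => Real.log (T t))
      ((∑ k, qw k * Real.log (qw k)) / T 0) 0 := hT'.log (by rw [hT0]; norm_num)
  have hf1 : HasDerivAt (fun t : ℝ => (t/2) * Real.log c) ((1/2) * Real.log c) 0 := by
    simpa using ((hasDerivAt_id (0:ℝ)).div_const 2).mul_const (Real.log c)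
  have hf2 : HasDerivAt (fun t : ℝ => ((1+t)/2)) (1/2) 0 := by
    simpa using ((hasDerivAt_id (0:ℝ)).const_add 1).div_const 2
  have hf3 : HasDerivAt (fun t : ℝ => ((1-t)/2)) (-(1/2)) 0 := by
    have h1 : HasDerivAt (fun t : ℝ => 1 - t) (-1) 0 := by
      exact (hasDerivAt_id (0:ℝ)).const_sub 1
    refine (h1.div_const 2).congr_deriv ?_
    norm_num
  have hΦ' : HasDerivAt Φ
      ((1/2) * Real.log c
        + ((1/2) * Real.log (S 0) + ((1+0)/2) * ((∑ j, -(pv j * Real.log (pv j))) / S 0))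
        - ((-(1/2)) * Real.log (T 0) + ((1-0)/2) * ((∑ k, qw k * Real.log (qw k)) / T 0))) 0 := by
    rw [hΦ_def]
    exact (hf1.add (hf2.mul hlogS)).sub (hf3.mul hlogT)
  set D : ℝ := (1/2) * Real.log c
        + ((1/2) * Real.log (S 0) + ((1+0)/2) * ((∑ j, -(pv j * Real.log (pv j))) / S 0))
        - ((-(1/2)) * Real.log (T 0) + ((1-0)/2) * ((∑ k, qw k * Real.log (qw k)) / T 0))
        with hD_def
  -- Φ ≥ 0 on (0,1)
  have hΦpos : ∀ t : ℝ, 0 < t → t < 1 → 0 ≤ Φ t := by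
    intro t h0 h1
    have h1t : (0:ℝ) < 1 + t := by linarith
    have h1t' : (0:ℝ) < 1 - t := by linarith
    have hSt := hSpos t (by linarith)
    have hTt := hTpos t h1
    have hk := key t h0 h1
    have hLHSpos : 0 < (T t) ^ ((1-t)/2) := Real.rpow_pos_of_pos hTt _
    have hlog := Real.log_le_log hLHSpos hk
    rw [Real.log_rpow hTt] at hlog
    rw [Real.log_mul (by positivity) (by positivity)] at hlog
    rw [Real.log_rpow hc, Real.log_rpow hSt] at hlog
    rw [hΦ_def]
    dsimp only
    linarith
  -- slope argument
  have hslope : Filter.Tendsto (slope Φ 0) (nhdsWithin 0 (Set.Ioi 0)) (nhds D) := by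
    have h := hasDerivAt_iff_tendsto_slope.mp hΦ'
    refine h.mono_left (nhdsWithin_mono 0 ?_)
    intro x hx
    exact ne_of_gt hx
  have hDpos : 0 ≤ D := by
    refine ge_of_tendsto hslope ?_
    filter_upwards [Ioo_mem_nhdsGT_of_mem (Set.mem_Ico.mpr ⟨le_refl (0:ℝ), one_pos⟩)] with t htm
    rw [slope_def_field, hΦ0, sub_zero, sub_zero]
    exact div_nonneg (hΦpos t htm.1 htm.2) (le_of_lt htm.1)
  -- conclude
  rw [hD_def, hS0, hT0] at hDpos
  simp only [Real.log_one, mul_zero, add_zero, zero_add, div_one, mul_one, neg_mul,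
    Finset.sum_neg_distrib] at hDpos
  have hsum : ∑ j, -(pv j * Real.log (pv j)) = -∑ j, pv j * Real.log (pv j) := by
    rw [Finset.sum_neg_distrib]
  linarith [hDpos]

open scoped InnerProductSpace in
/-- Maassen–Uffink uncertainty relation: for any unit vector `ψ ∈ ℂ^d` and
orthonormal bases `v, w`, `H(v) + H(w) ≥ -log r(v,w)` where
`H(v) = -∑ j, |⟨v j, ψ⟩|² log |⟨v j, ψ⟩|²` and `r(v,w) = max_{j,k} |⟨v j, w k⟩|²`. -/
theorem maassen_uffink (d : ℕ) (hd : 0 < d)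
    (ψ : EuclideanSpace ℂ (Fin d)) (hψ : ‖ψ‖ = 1)
    (v w : OrthonormalBasis (Fin d) ℂ (EuclideanSpace ℂ (Fin d))) :
    (-∑ j, ‖(⟪v j, ψ⟫_ℂ : ℂ)‖ ^ 2 * Real.log (‖(⟪v j, ψ⟫_ℂ : ℂ)‖ ^ 2)) +
    (-∑ k, ‖(⟪w k, ψ⟫_ℂ : ℂ)‖ ^ 2 * Real.log (‖(⟪w k, ψ⟫_ℂ : ℂ)‖ ^ 2)) ≥
      -Real.log (⨆ j, ⨆ k, ‖(⟪v j, w k⟫_ℂ : ℂ)‖ ^ 2) := by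
  classical
  have hne : Nonempty (Fin d) := ⟨⟨0, hd⟩⟩
  set c : ℝ := ⨆ j, ⨆ k, ‖(⟪v j, w k⟫_ℂ : ℂ)‖ ^ 2 with hc_def
  have hbdd1 : ∀ j : Fin d, BddAbove (Set.range fun k => ‖(⟪v j, w k⟫_ℂ : ℂ)‖ ^ 2) :=
    fun j => Set.Finite.bddAbove (Set.finite_range _)
  have hbdd2 : BddAbove (Set.range fun j => ⨆ k, ‖(⟪v j, w k⟫_ℂ : ℂ)‖ ^ 2) :=
    Set.Finite.bddAbove (Set.finite_range _)
  have hcle : ∀ j k, ‖(⟪v j, w k⟫_ℂ : ℂ)‖ ^ 2 ≤ c := by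
    intro j k
    rw [hc_def]
    exact le_trans (le_ciSup (hbdd1 j) k) (le_ciSup hbdd2 j)
  have hc1 : c ≤ 1 := by
    rw [hc_def]
    refine ciSup_le fun j => ciSup_le fun k => ?_
    have h := norm_inner_le_norm (𝕜 := ℂ) (v j) (w k)
    rw [v.orthonormal.1 j, w.orthonormal.1 k, one_mul] at h
    exact pow_le_one₀ (norm_nonneg _) h
  have ha2 : ∑ j, ‖(⟪v j, ψ⟫_ℂ : ℂ)‖ ^ 2 = 1 := by
    have h := MU_parseval v ψ
    rw [hψ, one_pow] at h
    exact h
  have hb2 : ∑ k, ‖(⟪w k, ψ⟫_ℂ : ℂ)‖ ^ 2 = 1 := by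
    have h := MU_parseval w ψ
    rw [hψ, one_pow] at h
    exact h
  have hc0 : 0 < c := by
    have h := MU_parseval w (v ⟨0, hd⟩)
    rw [v.orthonormal.1 ⟨0, hd⟩, one_pow] at h
    obtain ⟨k0, hk0⟩ : ∃ k, (⟪w k, v ⟨0, hd⟩⟫_ℂ : ℂ) ≠ 0 := by
      by_contra hcon
      push_neg at hcon
      simp [hcon] at h
    have hpos : 0 < ‖(⟪v ⟨0, hd⟩, w k0⟫_ℂ : ℂ)‖ ^ 2 := by
      have : (⟪v ⟨0, hd⟩, w k0⟫_ℂ : ℂ) ≠ 0 := by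
        intro hzero
        apply hk0
        rw [← inner_conj_symm]
        rw [hzero]
        simp
      exact pow_pos (norm_pos_iff.mpr this) 2
    exact lt_of_lt_of_le hpos (hcle _ k0)
  have hU : ∀ k j, ‖(⟪w k, v j⟫_ℂ : ℂ)‖ ^ 2 ≤ c := by
    intro k j
    calc ‖(⟪w k, v j⟫_ℂ : ℂ)‖ ^ 2 = ‖(⟪v j, w k⟫_ℂ : ℂ)‖ ^ 2 := by rw [norm_inner_symm]
      _ ≤ c := hcle j k
  have hiso : ∀ A : Fin d → ℂ,
      ∑ k, ‖∑ j, (⟪w k, v j⟫_ℂ : ℂ) * A j‖ ^ 2 = ∑ j, ‖A j‖ ^ 2 := by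
    intro A
    set x : EuclideanSpace ℂ (Fin d) := ∑ j, A j • v j with hx_def
    have h1 : ∀ k, (⟪w k, x⟫_ℂ : ℂ) = ∑ j, (⟪w k, v j⟫_ℂ : ℂ) * A j := by
      intro k
      rw [hx_def, inner_sum]
      refine Finset.sum_congr rfl fun j _ => ?_
      rw [inner_smul_right]
      ring
    have h2 : ∀ j, (⟪v j, x⟫_ℂ : ℂ) = A j := by
      intro j
      rw [hx_def, inner_sum]
      have hterm : ∀ i, (⟪v j, A i • v i⟫_ℂ : ℂ) = A i * (if j = i then 1 else 0) := by
        intro i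
        rw [inner_smul_right]
        congr 1
        exact orthonormal_iff_ite.mp v.orthonormal j i
      rw [Finset.sum_congr rfl fun i _ => hterm i]
      simp
    calc ∑ k, ‖∑ j, (⟪w k, v j⟫_ℂ : ℂ) * A j‖ ^ 2
        = ∑ k, ‖(⟪w k, x⟫_ℂ : ℂ)‖ ^ 2 := by
          refine Finset.sum_congr rfl fun k _ => ?_
          rw [h1 k]
      _ = ‖x‖ ^ 2 := MU_parseval w x
      _ = ∑ j, ‖(⟪v j, x⟫_ℂ : ℂ)‖ ^ 2 := (MU_parseval v x).symm
      _ = ∑ j, ‖A j‖ ^ 2 := by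
          refine Finset.sum_congr rfl fun j _ => ?_
          rw [h2 j]
  have hbexp : ∀ k, (⟪w k, ψ⟫_ℂ : ℂ) = ∑ j, (⟪w k, v j⟫_ℂ : ℂ) * (⟪v j, ψ⟫_ℂ : ℂ) := by
    intro k
    conv_lhs => rw [← v.sum_repr' ψ]
    rw [inner_sum]
    refine Finset.sum_congr rfl fun j _ => ?_
    rw [inner_smul_right]
    ring
  have key : ∀ t : ℝ, 0 < t → t < 1 →
      (∑ k, (‖(⟪w k, ψ⟫_ℂ : ℂ)‖ ^ 2) ^ ((1:ℝ)/(1-t))) ^ ((1-t)/2) ≤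
        c ^ (t/2) * (∑ j, (‖(⟪v j, ψ⟫_ℂ : ℂ)‖ ^ 2) ^ ((1:ℝ)/(1+t))) ^ ((1+t)/2) := by
    intro t ht ht1
    have h := MU_rt_step (fun j => (⟪v j, ψ⟫_ℂ : ℂ)) (fun k => (⟪w k, ψ⟫_ℂ : ℂ))
      (fun k j => (⟪w k, v j⟫_ℂ : ℂ)) c t hc0 hc1 hU hiso hbexp ha2 hb2 ht ht1
    have e1 : ∀ k : Fin d, (‖(⟪w k, ψ⟫_ℂ : ℂ)‖ ^ 2 : ℝ) ^ ((1:ℝ)/(1-t))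
        = ‖(⟪w k, ψ⟫_ℂ : ℂ)‖ ^ (2/(1-t)) := by
      intro k
      rw [← Real.rpow_natCast ‖(⟪w k, ψ⟫_ℂ : ℂ)‖ 2, ← Real.rpow_mul (norm_nonneg _)]
      congr 1
      push_cast
      ring
    have e2 : ∀ j : Fin d, (‖(⟪v j, ψ⟫_ℂ : ℂ)‖ ^ 2 : ℝ) ^ ((1:ℝ)/(1+t))
        = ‖(⟪v j, ψ⟫_ℂ : ℂ)‖ ^ (2/(1+t)) := by
      intro j
      rw [← Real.rpow_natCast ‖(⟪v j, ψ⟫_ℂ : ℂ)‖ 2, ← Real.rpow_mul (norm_nonneg _)]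
      congr 1
      push_cast
      ring
    rw [Finset.sum_congr rfl fun k _ => e1 k, Finset.sum_congr rfl fun j _ => e2 j]
    exact h
  exact MU_deriv_part (fun j => ‖(⟪v j, ψ⟫_ℂ : ℂ)‖ ^ 2) (fun k => ‖(⟪w k, ψ⟫_ℂ : ℂ)‖ ^ 2)
    c hc0 (fun j => sq_nonneg _) (fun k => sq_nonneg _) ha2 hb2 key
end

section
/- For s ∣ d, the basis vector |w^s_{β,γ}⟩ satisfies |⟨z_k|w^s_{β,γ}⟩|² ∈ {0, 1/s} and |⟨x_j|w^s_{β,γ}⟩|² ∈ {0, s/d}; hence the Shannon entropies of its measurement distributions are H(z) = log s and H(x) = log(d/s), so H(x) + H(z) = log d, i.e., these states saturate the Maassen–Uffink bound for Fourier-conjugate bases. -/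
open scoped InnerProductSpace

open Complex Finset in
private lemma entropy_helper {α : Type*} [Fintype α] [DecidableEq α] (S : Finset α) (p : ℝ)
    (f : α → ℝ) (hf : ∀ a, f a = if a ∈ S then p else 0) :
    -∑ a, f a * Real.log (f a) = -(S.card * (p * Real.log p)) := by
  have h : ∀ a, f a * Real.log (f a) = if a ∈ S then p * Real.log p else 0 := by
    intro a; rw [hf]; split <;> simp
  rw [Finset.sum_congr rfl (fun a _ => h a), Finset.sum_ite_mem, Finset.univ_inter,
    Finset.sum_const, nsmul_eq_mul]

private lemma int_dvd_iff_mod (s γ a : ℕ) (hγ : γ < s) :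
    (s:ℤ) ∣ ((a:ℤ) - γ) ↔ a % s = γ := by
  rw [← Nat.modEq_iff_dvd, Nat.ModEq, Nat.mod_eq_of_lt hγ, eq_comm]

open Complex in
/-- For `s ∣ d`, the state `|w^s_{β,γ}⟩` has overlaps
`|⟨z k, w⟩|² ∈ {0, 1/s}` and `|⟨x j, w⟩|² ∈ {0, s/d}`, hence the Shannon entropies of
its `z`- and `x`-measurement distributions are `H(z) = log s`, `H(x) = log (d/s)`,
so `H(x) + H(z) = log d`: these states saturate the Maassen–Uffink bound. -/
theorem w_state_saturates_maassen_uffink (d s : ℕ) [NeZero d] (hs : s ∣ d)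
    (x : OrthonormalBasis (ZMod d) ℂ (EuclideanSpace ℂ (ZMod d)))
    (z : OrthonormalBasis (ZMod d) ℂ (EuclideanSpace ℂ (ZMod d)))
    (hz : ∀ k : ZMod d, z k = ∑ j : ZMod d,
      (Complex.exp ((2 * Real.pi * I) * (j.val * k.val) / d) / (Real.sqrt d : ℂ)) • x j)
    (β : Fin (d / s)) (γ : Fin s)
    (w : EuclideanSpace ℂ (ZMod d))
    (hw : w = ∑ n : Fin s,
      (Complex.exp (-(2 * Real.pi * I) * (n : ℕ) * (γ : ℕ) * (d / s : ℕ) / d) /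
        (Real.sqrt s : ℂ)) • z (((β : ℕ) + (n : ℕ) * (d / s) : ℕ) : ZMod d)) :
    (∀ k, ‖(⟪z k, w⟫_ℂ : ℂ)‖ ^ 2 = 0 ∨ ‖(⟪z k, w⟫_ℂ : ℂ)‖ ^ 2 = 1 / s) ∧
    (∀ j, ‖(⟪x j, w⟫_ℂ : ℂ)‖ ^ 2 = 0 ∨ ‖(⟪x j, w⟫_ℂ : ℂ)‖ ^ 2 = s / d) ∧
    (-∑ k, ‖(⟪z k, w⟫_ℂ : ℂ)‖ ^ 2 * Real.log (‖(⟪z k, w⟫_ℂ : ℂ)‖ ^ 2) = Real.log s) ∧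
    (-∑ j, ‖(⟪x j, w⟫_ℂ : ℂ)‖ ^ 2 * Real.log (‖(⟪x j, w⟫_ℂ : ℂ)‖ ^ 2) =
      Real.log ((d : ℝ) / s)) ∧
    ((-∑ j, ‖(⟪x j, w⟫_ℂ : ℂ)‖ ^ 2 * Real.log (‖(⟪x j, w⟫_ℂ : ℂ)‖ ^ 2)) +
      (-∑ k, ‖(⟪z k, w⟫_ℂ : ℂ)‖ ^ 2 * Real.log (‖(⟪z k, w⟫_ℂ : ℂ)‖ ^ 2)) =
        Real.log d) := by
  have hd0 : d ≠ 0 := NeZero.ne d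
  have hs0 : s ≠ 0 := by rintro rfl; exact hd0 (Nat.eq_zero_of_zero_dvd hs)
  have hsD : s * (d / s) = d := Nat.mul_div_cancel' hs
  have hD0 : d / s ≠ 0 := by rintro h; rw [h, Nat.mul_zero] at hsD; exact hd0 hsD.symm
  have hdR : (0:ℝ) < d := by positivity
  have hsR : (0:ℝ) < s := by exact_mod_cast Nat.pos_of_ne_zero hs0
  have hDR : (0:ℝ) < (d/s : ℕ) := by exact_mod_cast Nat.pos_of_ne_zero hD0
  have hsC : (s:ℂ) ≠ 0 := Nat.cast_ne_zero.mpr hs0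
  have hdC : (d:ℂ) ≠ 0 := Nat.cast_ne_zero.mpr hd0
  have h2pi : (2 * (Real.pi:ℂ) * I) ≠ 0 := by
    refine mul_ne_zero (mul_ne_zero two_ne_zero ?_) I_ne_zero
    exact_mod_cast Complex.ofReal_ne_zero.mpr Real.pi_ne_zero
  -- the z-indices of the support
  set kn : Fin s → ZMod d := fun n => (((β : ℕ) + (n : ℕ) * (d / s) : ℕ) : ZMod d) with hkn
  have hlt : ∀ n : Fin s, (β : ℕ) + (n : ℕ) * (d / s) < d := by
    intro n
    calc (β : ℕ) + (n : ℕ) * (d / s) < (d / s) + (n : ℕ) * (d / s) := by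
          exact Nat.add_lt_add_right β.isLt _
      _ = ((n : ℕ) + 1) * (d / s) := by ring
      _ ≤ s * (d / s) := Nat.mul_le_mul_right _ n.isLt
      _ = d := hsD
  have hinj : Function.Injective kn := by
    intro n m h
    have h1 : ((β : ℕ) + (n : ℕ) * (d / s)) = ((β : ℕ) + (m : ℕ) * (d / s)) := by
      have := congrArg ZMod.val h
      rwa [hkn, ZMod.val_cast_of_lt (hlt n), ZMod.val_cast_of_lt (hlt m)] at this
    have h2 : (n : ℕ) * (d / s) = (m : ℕ) * (d / s) := by omega
    exact Fin.ext (Nat.eq_of_mul_eq_mul_right (Nat.pos_of_ne_zero hD0) h2)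
  set Sz : Finset (ZMod d) := Finset.univ.image kn with hSz
  -- the coefficients
  set c : Fin s → ℂ := fun n =>
    Complex.exp (-(2 * Real.pi * I) * (n : ℕ) * (γ : ℕ) * ((d / s : ℕ) : ℂ) / d) / (Real.sqrt s : ℂ) with hc
  have hnormc : ∀ n, ‖c n‖ = 1 / Real.sqrt s := by
    intro n
    have harg : -(2 * (Real.pi:ℂ) * I) * (n : ℕ) * (γ : ℕ) * ((d / s : ℕ) : ℂ) / d =
        ((-(2 * Real.pi * (n:ℕ) * (γ:ℕ) * ((d/s : ℕ)) / d) : ℝ) : ℂ) * I := by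
      push_cast; ring
    rw [hc, norm_div, harg, Complex.norm_exp_ofReal_mul_I]
    simp [Complex.norm_real, Real.sqrt_nonneg, _root_.abs_of_nonneg]
  -- z inner products
  have hzin : ∀ k : ZMod d, ⟪z k, w⟫_ℂ = ∑ n : Fin s, c n * (if k = kn n then 1 else 0) := by
    intro k
    rw [hw, inner_sum]
    refine Finset.sum_congr rfl fun n _ => ?_
    rw [inner_smul_right, orthonormal_iff_ite.mp z.orthonormal]
  have hznorm : ∀ k : ZMod d, ‖(⟪z k, w⟫_ℂ : ℂ)‖ ^ 2 = if k ∈ Sz then 1 / (s:ℝ) else 0 := by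
    intro k
    by_cases hk : k ∈ Sz
    · obtain ⟨n, -, hn⟩ := Finset.mem_image.mp hk
      have : ⟪z k, w⟫_ℂ = c n := by
        rw [hzin]
        rw [Finset.sum_eq_single n]
        · simp [hn.symm]
        · intro m _ hm
          have : k ≠ kn m := by
            rw [← hn]; exact fun h => hm (hinj h.symm)
          simp [this]
        · simp
      rw [this, if_pos hk, hnormc]
      rw [div_pow, one_pow, Real.sq_sqrt (le_of_lt hsR)]
    · have : ⟪z k, w⟫_ℂ = 0 := by
        rw [hzin]
        refine Finset.sum_eq_zero fun n _ => ?_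
        have : k ≠ kn n := fun h => hk (Finset.mem_image.mpr ⟨n, Finset.mem_univ n, h.symm⟩)
        simp [this]
      simp [this, hk]
  -- x–z overlaps
  have hxz : ∀ j k : ZMod d, ⟪x j, (z k : EuclideanSpace ℂ (ZMod d))⟫_ℂ =
      Complex.exp ((2 * Real.pi * I) * (j.val * k.val) / d) / (Real.sqrt d : ℂ) := by
    intro j k
    rw [hz k, inner_sum]
    have : ∀ j' : ZMod d, (⟪x j, (Complex.exp ((2 * Real.pi * I) * ((j':ZMod d).val * k.val) / d) / (Real.sqrt d : ℂ)) • x j'⟫_ℂ) =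
        if j = j' then Complex.exp ((2 * Real.pi * I) * (j.val * k.val) / d) / (Real.sqrt d : ℂ) else 0 := by
      intro j'
      rw [inner_smul_right, orthonormal_iff_ite.mp x.orthonormal]
      split
      · next h => subst h; ring
      · ring
    rw [Finset.sum_congr rfl fun j' _ => this j', Finset.sum_ite_eq]
    simp
  -- x inner products, raw form
  have hxin : ∀ j : ZMod d, ⟪x j, w⟫_ℂ = ∑ n : Fin s, c n *
      (Complex.exp ((2 * Real.pi * I) * ((j.val : ℂ) * (((β:ℕ) + (n:ℕ)*(d/s) : ℕ) : ℂ)) / d) /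
        (Real.sqrt d : ℂ)) := by
    intro j
    rw [hw, inner_sum]
    refine Finset.sum_congr rfl fun n _ => ?_
    rw [inner_smul_right, hxz, ZMod.val_cast_of_lt (hlt n)]
  -- x norms
  have hxnorm : ∀ j : ZMod d, ‖(⟪x j, w⟫_ℂ : ℂ)‖ ^ 2 =
      if j.val % s = (γ:ℕ) then (s:ℝ)/d else 0 := by
    intro j
    have hds : (s:ℂ) * ((d/s : ℕ):ℂ) = (d:ℂ) := by exact_mod_cast hsD
    set m : ℤ := (j.val : ℤ) - (γ : ℕ) with hm
    set ζ : ℂ := Complex.exp (2 * Real.pi * I * (m : ℂ) * ((d/s : ℕ):ℂ) / d) with hζ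
    set C : ℂ := Complex.exp ((2 * Real.pi * I) * ((j.val : ℂ) * ((β:ℕ):ℂ)) / d) /
      ((Real.sqrt s : ℂ) * (Real.sqrt d : ℂ)) with hC
    have hζs : ζ = Complex.exp (2 * Real.pi * I * (m : ℂ) / s) := by
      rw [hζ]
      congr 1
      rw [div_eq_div_iff hdC hsC]
      linear_combination (2 * (Real.pi:ℂ) * I * (m:ℂ)) * hds
    have hζpow : ζ ^ s = 1 := by
      rw [hζs, ← Complex.exp_nat_mul]
      have : (s:ℂ) * (2 * Real.pi * I * (m : ℂ) / s) = (m : ℂ) * (2 * Real.pi * I) := by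
        field_simp
      rw [this]
      exact_mod_cast Complex.exp_int_mul_two_pi_mul_I m
    have hCnorm : ‖C‖ = 1 / (Real.sqrt s * Real.sqrt d) := by
      have harg : (2 * (Real.pi:ℂ) * I) * ((j.val : ℂ) * ((β:ℕ):ℂ)) / d =
          ((2 * Real.pi * (j.val:ℕ) * (β:ℕ) / d : ℝ) : ℂ) * I := by push_cast; ring
      rw [hC, norm_div, harg, Complex.norm_exp_ofReal_mul_I]
      simp [Complex.norm_real, norm_mul, Real.sqrt_nonneg, _root_.abs_of_nonneg, mul_nonneg]
    have hterm : ∀ n : Fin s, c n *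
        (Complex.exp ((2 * Real.pi * I) * ((j.val : ℂ) * (((β:ℕ) + (n:ℕ)*(d/s) : ℕ) : ℂ)) / d) /
          (Real.sqrt d : ℂ)) = C * ζ ^ (n:ℕ) := by
      intro n
      rw [hc, hC, hζ, ← Complex.exp_nat_mul, div_mul_div_comm, ← Complex.exp_add,
        div_mul_eq_mul_div, ← Complex.exp_add]
      congr 1
      · congr 1
        rw [hm]
        push_cast
        field_simp
        ring
    have hsum : ⟪x j, w⟫_ℂ = C * ∑ n ∈ Finset.range s, ζ ^ n := by
      rw [hxin j, Finset.sum_congr rfl fun n _ => hterm n, ← Finset.mul_sum,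
        Fin.sum_univ_eq_sum_range (fun n => ζ ^ n)]
    by_cases hcase : j.val % s = (γ:ℕ)
    · -- in support
      have hdvd : (s:ℤ) ∣ m := (int_dvd_iff_mod s (γ:ℕ) j.val γ.isLt).mpr hcase
      obtain ⟨t, ht⟩ := hdvd
      have hζ1 : ζ = 1 := by
        rw [hζs, ht]
        have : 2 * (Real.pi:ℂ) * I * ((((s:ℤ) * t : ℤ)) : ℂ) / s = (t:ℂ) * (2 * Real.pi * I) := by
          push_cast; field_simp
        rw [this]
        exact_mod_cast Complex.exp_int_mul_two_pi_mul_I t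
      have : ⟪x j, w⟫_ℂ = C * s := by
        rw [hsum, hζ1]
        simp
      rw [this, if_pos hcase, norm_mul, hCnorm]
      have hns : ‖(s:ℂ)‖ = (s:ℝ) := by
        rw [Complex.norm_natCast]
      rw [hns, mul_pow, div_pow, one_pow, mul_pow, Real.sq_sqrt hsR.le, Real.sq_sqrt hdR.le]
      field_simp
    · -- out of support
      have hdvd : ¬ (s:ℤ) ∣ m := fun h => hcase ((int_dvd_iff_mod s (γ:ℕ) j.val γ.isLt).mp h)
      have hζne : ζ ≠ 1 := by
        intro h1
        rw [hζs, Complex.exp_eq_one_iff] at h1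
        obtain ⟨t, ht⟩ := h1
        have ht' : (2 * (Real.pi:ℂ) * I) * (m:ℂ) = (2 * (Real.pi:ℂ) * I) * ((s:ℂ) * t) := by
          field_simp at ht
          linear_combination (2 * (Real.pi:ℂ) * I) * ht
        have hmc : (m:ℂ) = ((s * t : ℤ) : ℂ) := by
          push_cast
          exact mul_left_cancel₀ h2pi ht'
        exact hdvd ⟨t, by exact_mod_cast hmc⟩
      have hgeom : ∑ n ∈ Finset.range s, ζ ^ n = 0 := by
        rw [geom_sum_eq hζne, hζpow, sub_self, zero_div]
      rw [hsum, hgeom, mul_zero, if_neg hcase]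
      simp
  -- cardinalities
  have hSzcard : Sz.card = s := by
    rw [hSz, Finset.card_image_of_injective _ hinj, Finset.card_univ, Fintype.card_fin]
  classical
  set Sx : Finset (ZMod d) := Finset.univ.filter (fun j : ZMod d => j.val % s = (γ:ℕ)) with hSxdef
  set f : Fin (d/s) → ZMod d := fun q => (((γ:ℕ) + (q:ℕ)*s : ℕ) : ZMod d) with hf
  have hflt : ∀ q : Fin (d/s), (γ:ℕ) + (q:ℕ)*s < d := by
    intro q
    calc (γ:ℕ) + (q:ℕ)*s < s + (q:ℕ)*s := Nat.add_lt_add_right γ.isLt _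
      _ = ((q:ℕ) + 1) * s := by ring
      _ ≤ (d/s) * s := Nat.mul_le_mul_right _ q.isLt
      _ = d := by rw [mul_comm]; exact hsD
  have hfinj : Function.Injective f := by
    intro q r h
    have h1 : (γ:ℕ) + (q:ℕ)*s = (γ:ℕ) + (r:ℕ)*s := by
      have := congrArg ZMod.val h
      rwa [hf, ZMod.val_cast_of_lt (hflt q), ZMod.val_cast_of_lt (hflt r)] at this
    have h2 : (q:ℕ)*s = (r:ℕ)*s := by omega
    exact Fin.ext (Nat.eq_of_mul_eq_mul_right (Nat.pos_of_ne_zero hs0) h2)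
  have hSx_eq : Sx = Finset.univ.image f := by
    ext j
    simp only [hSxdef, hf, Finset.mem_filter, Finset.mem_univ, true_and, Finset.mem_image]
    constructor
    · intro h
      have hq : j.val / s < d / s := by
        apply Nat.div_lt_div_of_lt_of_dvd hs
        exact ZMod.val_lt j
      refine ⟨⟨j.val / s, hq⟩, ?_⟩
      have hval : (γ:ℕ) + (j.val / s) * s = j.val := by
        conv_rhs => rw [← Nat.mod_add_div' j.val s]
        rw [h]
      simp only [hval]
      exact ZMod.natCast_zmod_val j
    · rintro ⟨q, rfl⟩
      rw [ZMod.val_cast_of_lt (hflt q), Nat.add_mul_mod_self_right,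
        Nat.mod_eq_of_lt γ.isLt]
  have hSxcard : Sx.card = d / s := by
    rw [hSx_eq, Finset.card_image_of_injective _ hfinj, Finset.card_univ, Fintype.card_fin]
  -- entropies
  have Hz : -∑ k, ‖(⟪z k, w⟫_ℂ : ℂ)‖ ^ 2 * Real.log (‖(⟪z k, w⟫_ℂ : ℂ)‖ ^ 2) = Real.log s := by
    rw [entropy_helper Sz (1/(s:ℝ)) _ hznorm, hSzcard, one_div, Real.log_inv]
    field_simp
  have hxnorm' : ∀ j : ZMod d, ‖(⟪x j, w⟫_ℂ : ℂ)‖ ^ 2 = if j ∈ Sx then (s:ℝ)/d else 0 := by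
    intro j
    rw [hxnorm j, hSxdef]
    simp [Finset.mem_filter]
  have Hx : -∑ j, ‖(⟪x j, w⟫_ℂ : ℂ)‖ ^ 2 * Real.log (‖(⟪x j, w⟫_ℂ : ℂ)‖ ^ 2) =
      Real.log ((d : ℝ) / s) := by
    rw [entropy_helper Sx ((s:ℝ)/d) _ hxnorm', hSxcard]
    have hcast : ((d/s : ℕ):ℝ) = (d:ℝ)/s := by
      rw [Nat.cast_div hs (by exact_mod_cast hs0)]
    rw [hcast, Real.log_div hsR.ne' hdR.ne', Real.log_div hdR.ne' hsR.ne']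
    field_simp
    ring
  refine ⟨?_, ?_, Hz, Hx, ?_⟩
  · intro k
    rw [hznorm k]
    split
    · exact Or.inr rfl
    · exact Or.inl rfl
  · intro j
    rw [hxnorm' j]
    split
    · exact Or.inr rfl
    · exact Or.inl rfl
  · rw [Hz, Hx, Real.log_div hdR.ne' hsR.ne']
    ring
end

section
/- Qutrit hidden complementarity: let v = {|0⟩,|1⟩,|2⟩} and w = {|0⟩, (|1⟩+|2⟩)/√2, (|1⟩-|2⟩)/√2} in C³, and Π the projection onto span{|1⟩,|2⟩}. Then max_{j,k} ‖ [w_k] Π [v_j] ‖_∞² = 1/2 (so -log r(v,w;Π) = log 2), whereas max_{j,k} |⟨v_j|w_k⟩|² = 1. -/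
open scoped Matrix.Norms.L2Operator
open Matrix

/-- A nonzero matrix with `Nᴴ * N = N` has L2 operator norm 1. -/
private lemma norm_of_proj {N : Matrix (Fin 3) (Fin 3) ℂ}
    (h1 : Nᴴ * N = N) (h0 : N ≠ 0) : ‖N‖ = 1 := by
  have h : ‖N‖ * ‖N‖ = ‖N‖ := by
    rw [← Matrix.l2_opNorm_conjTranspose_mul_self, h1]
  have hpos : 0 < ‖N‖ := norm_pos_iff.mpr h0
  nlinarith

/-- If `Mᴴ * M = (1/2) • N` with `N` a nonzero projection, then
`‖toEuclideanCLM M‖² = 1/2`. -/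
private lemma norm_sq_eq_half {M N : Matrix (Fin 3) (Fin 3) ℂ}
    (h : Mᴴ * M = (1/2 : ℂ) • N) (h1 : Nᴴ * N = N) (h0 : N ≠ 0) :
    ‖Matrix.toEuclideanCLM (𝕜 := ℂ) M‖ ^ 2 = 1 / 2 := by
  rw [← Matrix.cstar_norm_def, sq, ← Matrix.l2_opNorm_conjTranspose_mul_self, h,
    norm_smul, norm_of_proj h1 h0]
  norm_num

set_option maxHeartbeats 2000000 in
/-- Qutrit hidden complementarity.  With `v` the standard basis of `ℂ³`,
`w = {|0⟩, (|1⟩+|2⟩)/√2, (|1⟩-|2⟩)/√2}`, and `Π` the projection onto `span{|1⟩,|2⟩}`,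
we have `max_{j,k} ‖[w k] Π [v j]‖_∞² = 1/2` (so `-log r(v,w;Π) = log 2`), whereas
`max_{j,k} |⟨v j, w k⟩|² = max_{j,k} Re Tr([w k][v j]) = 1`. -/
theorem qutrit_hidden_complementarity
    (P Q : Fin 3 → Matrix (Fin 3) (Fin 3) ℂ) (Pi : Matrix (Fin 3) (Fin 3) ℂ)
    (hP : ∀ j, P j = Matrix.single j j 1)
    (hQ0 : Q 0 = !![1, 0, 0; 0, 0, 0; 0, 0, 0])
    (hQ1 : Q 1 = !![0, 0, 0; 0, 1/2, 1/2; 0, 1/2, 1/2])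
    (hQ2 : Q 2 = !![0, 0, 0; 0, 1/2, -(1/2); 0, -(1/2), 1/2])
    (hPi : Pi = !![0, 0, 0; 0, 1, 0; 0, 0, 1]) :
    (⨆ jk : Fin 3 × Fin 3,
        ‖Matrix.toEuclideanCLM (𝕜 := ℂ) (Q jk.2 * Pi * P jk.1)‖ ^ 2) = 1 / 2 ∧
    -Real.log (⨆ jk : Fin 3 × Fin 3,
        ‖Matrix.toEuclideanCLM (𝕜 := ℂ) (Q jk.2 * Pi * P jk.1)‖ ^ 2) = Real.log 2 ∧
    (⨆ jk : Fin 3 × Fin 3, ((Q jk.2 * P jk.1).trace).re) = 1 := by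
  -- explicit forms of the basis projections
  have hP0 : P 0 = !![(1:ℂ),0,0;0,0,0;0,0,0] := by
    rw [hP]; ext i j; fin_cases i <;> fin_cases j <;>
      simp [Matrix.single, Matrix.vecHead, Matrix.vecTail]
  have hP1 : P 1 = !![(0:ℂ),0,0;0,1,0;0,0,0] := by
    rw [hP]; ext i j; fin_cases i <;> fin_cases j <;>
      simp [Matrix.single, Matrix.vecHead, Matrix.vecTail]
  have hP2 : P 2 = !![(0:ℂ),0,0;0,0,0;0,0,1] := by
    rw [hP]; ext i j; fin_cases i <;> fin_cases j <;>
      simp [Matrix.single, Matrix.vecHead, Matrix.vecTail]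
  -- the two projections used on the Q side
  have hN1 : (!![0,0,0;0,1,0;0,0,0] : Matrix (Fin 3) (Fin 3) ℂ)ᴴ * !![0,0,0;0,1,0;0,0,0]
      = !![0,0,0;0,1,0;0,0,0] := by
    ext i j; fin_cases i <;> fin_cases j <;>
      simp [Matrix.mul_apply, Fin.sum_univ_three, Matrix.conjTranspose_apply,
        Matrix.vecHead, Matrix.vecTail]
  have hN2 : (!![0,0,0;0,0,0;0,0,1] : Matrix (Fin 3) (Fin 3) ℂ)ᴴ * !![0,0,0;0,0,0;0,0,1]
      = !![0,0,0;0,0,0;0,0,1] := by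
    ext i j; fin_cases i <;> fin_cases j <;>
      simp [Matrix.mul_apply, Fin.sum_univ_three, Matrix.conjTranspose_apply,
        Matrix.vecHead, Matrix.vecTail]
  have hN1ne : (!![0,0,0;0,1,0;0,0,0] : Matrix (Fin 3) (Fin 3) ℂ) ≠ 0 := by
    intro h
    have := congrFun (congrFun h 1) 1
    simp [Matrix.vecHead, Matrix.vecTail] at this
  have hN2ne : (!![0,0,0;0,0,0;0,0,1] : Matrix (Fin 3) (Fin 3) ℂ) ≠ 0 := by
    intro h
    have := congrFun (congrFun h 2) 2
    simp [Matrix.vecHead, Matrix.vecTail] at this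
  -- products with Π
  have hQ0Pi : Q 0 * Pi = 0 := by
    rw [hQ0, hPi]; ext i j; fin_cases i <;> fin_cases j <;>
      simp [Matrix.mul_apply, Fin.sum_univ_three, Matrix.vecHead, Matrix.vecTail]
  have hQ1Pi : Q 1 * Pi = Q 1 := by
    rw [hQ1, hPi]; ext i j; fin_cases i <;> fin_cases j <;>
      simp [Matrix.mul_apply, Fin.sum_univ_three, Matrix.vecHead, Matrix.vecTail]
  have hQ2Pi : Q 2 * Pi = Q 2 := by
    rw [hQ2, hPi]; ext i j; fin_cases i <;> fin_cases j <;>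
      simp [Matrix.mul_apply, Fin.sum_univ_three, Matrix.vecHead, Matrix.vecTail]
  -- the four nonzero products
  have hM11 : Q 1 * P 1 = !![0,0,0;0,(1/2:ℂ),0;0,1/2,0] := by
    rw [hQ1, hP1]; ext i j; fin_cases i <;> fin_cases j <;>
      simp [Matrix.mul_apply, Fin.sum_univ_three, Matrix.vecHead, Matrix.vecTail]
  have hM12 : Q 1 * P 2 = !![0,0,0;0,0,(1/2:ℂ);0,0,1/2] := by
    rw [hQ1, hP2]; ext i j; fin_cases i <;> fin_cases j <;>
      simp [Matrix.mul_apply, Fin.sum_univ_three, Matrix.vecHead, Matrix.vecTail]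
  have hM21 : Q 2 * P 1 = !![0,0,0;0,(1/2:ℂ),0;0,-(1/2),0] := by
    rw [hQ2, hP1]; ext i j; fin_cases i <;> fin_cases j <;>
      simp [Matrix.mul_apply, Fin.sum_univ_three, Matrix.vecHead, Matrix.vecTail]
  have hM22 : Q 2 * P 2 = !![0,0,0;0,0,-(1/2:ℂ);0,0,1/2] := by
    rw [hQ2, hP2]; ext i j; fin_cases i <;> fin_cases j <;>
      simp [Matrix.mul_apply, Fin.sum_univ_three, Matrix.vecHead, Matrix.vecTail]
  -- zero products
  have hZ1 : Q 1 * P 0 = 0 := by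
    rw [hQ1, hP0]; ext i j; fin_cases i <;> fin_cases j <;>
      simp [Matrix.mul_apply, Fin.sum_univ_three, Matrix.vecHead, Matrix.vecTail]
  have hZ2 : Q 2 * P 0 = 0 := by
    rw [hQ2, hP0]; ext i j; fin_cases i <;> fin_cases j <;>
      simp [Matrix.mul_apply, Fin.sum_univ_three, Matrix.vecHead, Matrix.vecTail]
  -- star-products
  have hS11 : (!![0,0,0;0,(1/2:ℂ),0;0,1/2,0])ᴴ * !![0,0,0;0,(1/2:ℂ),0;0,1/2,0]
      = (1/2 : ℂ) • !![0,0,0;0,1,0;0,0,0] := by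
    ext i j; fin_cases i <;> fin_cases j <;>
      simp [Matrix.mul_apply, Fin.sum_univ_three, Matrix.conjTranspose_apply,
        Matrix.vecHead, Matrix.vecTail, map_ofNat] <;> norm_num
  have hS12 : (!![0,0,0;0,0,(1/2:ℂ);0,0,1/2])ᴴ * !![0,0,0;0,0,(1/2:ℂ);0,0,1/2]
      = (1/2 : ℂ) • !![0,0,0;0,0,0;0,0,1] := by
    ext i j; fin_cases i <;> fin_cases j <;>
      simp [Matrix.mul_apply, Fin.sum_univ_three, Matrix.conjTranspose_apply,
        Matrix.vecHead, Matrix.vecTail, map_ofNat] <;> norm_num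
  have hS21 : (!![0,0,0;0,(1/2:ℂ),0;0,-(1/2),0])ᴴ * !![0,0,0;0,(1/2:ℂ),0;0,-(1/2),0]
      = (1/2 : ℂ) • !![0,0,0;0,1,0;0,0,0] := by
    ext i j; fin_cases i <;> fin_cases j <;>
      simp [Matrix.mul_apply, Fin.sum_univ_three, Matrix.conjTranspose_apply,
        Matrix.vecHead, Matrix.vecTail, map_ofNat] <;> norm_num
  have hS22 : (!![0,0,0;0,0,-(1/2:ℂ);0,0,1/2])ᴴ * !![0,0,0;0,0,-(1/2:ℂ);0,0,1/2]
      = (1/2 : ℂ) • !![0,0,0;0,0,0;0,0,1] := by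
    ext i j; fin_cases i <;> fin_cases j <;>
      simp [Matrix.mul_apply, Fin.sum_univ_three, Matrix.conjTranspose_apply,
        Matrix.vecHead, Matrix.vecTail, map_ofNat] <;> norm_num
  -- the function under the first sup
  set f : Fin 3 × Fin 3 → ℝ :=
    fun jk => ‖Matrix.toEuclideanCLM (𝕜 := ℂ) (Q jk.2 * Pi * P jk.1)‖ ^ 2 with hf
  have hf11 : f (1, 1) = 1 / 2 := by
    show ‖Matrix.toEuclideanCLM (𝕜 := ℂ) (Q 1 * Pi * P 1)‖ ^ 2 = 1 / 2
    rw [hQ1Pi, hM11]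
    exact norm_sq_eq_half hS11 hN1 hN1ne
  have hfle : ∀ jk, f jk ≤ 1 / 2 := by
    rintro ⟨j, k⟩
    fin_cases j <;> fin_cases k
    · show ‖Matrix.toEuclideanCLM (𝕜 := ℂ) (Q 0 * Pi * P 0)‖ ^ 2 ≤ 1 / 2
      rw [hQ0Pi, zero_mul, map_zero, norm_zero]; norm_num
    · show ‖Matrix.toEuclideanCLM (𝕜 := ℂ) (Q 1 * Pi * P 0)‖ ^ 2 ≤ 1 / 2
      rw [hQ1Pi, hZ1, map_zero, norm_zero]; norm_num
    · show ‖Matrix.toEuclideanCLM (𝕜 := ℂ) (Q 2 * Pi * P 0)‖ ^ 2 ≤ 1 / 2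
      rw [hQ2Pi, hZ2, map_zero, norm_zero]; norm_num
    · show ‖Matrix.toEuclideanCLM (𝕜 := ℂ) (Q 0 * Pi * P 1)‖ ^ 2 ≤ 1 / 2
      rw [hQ0Pi, zero_mul, map_zero, norm_zero]; norm_num
    · show ‖Matrix.toEuclideanCLM (𝕜 := ℂ) (Q 1 * Pi * P 1)‖ ^ 2 ≤ 1 / 2
      rw [hQ1Pi, hM11, norm_sq_eq_half hS11 hN1 hN1ne]
    · show ‖Matrix.toEuclideanCLM (𝕜 := ℂ) (Q 2 * Pi * P 1)‖ ^ 2 ≤ 1 / 2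
      rw [hQ2Pi, hM21, norm_sq_eq_half hS21 hN1 hN1ne]
    · show ‖Matrix.toEuclideanCLM (𝕜 := ℂ) (Q 0 * Pi * P 2)‖ ^ 2 ≤ 1 / 2
      rw [hQ0Pi, zero_mul, map_zero, norm_zero]; norm_num
    · show ‖Matrix.toEuclideanCLM (𝕜 := ℂ) (Q 1 * Pi * P 2)‖ ^ 2 ≤ 1 / 2
      rw [hQ1Pi, hM12, norm_sq_eq_half hS12 hN2 hN2ne]
    · show ‖Matrix.toEuclideanCLM (𝕜 := ℂ) (Q 2 * Pi * P 2)‖ ^ 2 ≤ 1 / 2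
      rw [hQ2Pi, hM22, norm_sq_eq_half hS22 hN2 hN2ne]
  have hsup1 : (⨆ jk : Fin 3 × Fin 3, f jk) = 1 / 2 := by
    refine le_antisymm (ciSup_le hfle) ?_
    have := le_ciSup (Set.Finite.bddAbove (Set.finite_range f)) ((1, 1) : Fin 3 × Fin 3)
    rw [hf11] at this
    exact this
  refine ⟨hsup1, ?_, ?_⟩
  · rw [hsup1, one_div, Real.log_inv, neg_neg]
  · -- traces
    set g : Fin 3 × Fin 3 → ℝ := fun jk => ((Q jk.2 * P jk.1).trace).re with hg
    have hg00 : g (0, 0) = 1 := by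
      show ((Q 0 * P 0).trace).re = 1
      rw [hQ0, hP0]
      simp [Matrix.trace_fin_three, Matrix.mul_apply, Fin.sum_univ_three,
        Matrix.vecHead, Matrix.vecTail]
    have hgle : ∀ jk, g jk ≤ 1 := by
      rintro ⟨j, k⟩
      fin_cases j <;> fin_cases k
      · show ((Q 0 * P 0).trace).re ≤ 1
        rw [hQ0, hP0]
        simp [Matrix.trace_fin_three, Matrix.mul_apply, Fin.sum_univ_three,
          Matrix.vecHead, Matrix.vecTail]
      · show ((Q 1 * P 0).trace).re ≤ 1
        rw [hZ1]; simp
      · show ((Q 2 * P 0).trace).re ≤ 1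
        rw [hZ2]; simp
      · show ((Q 0 * P 1).trace).re ≤ 1
        rw [hQ0, hP1]
        simp [Matrix.trace_fin_three, Matrix.mul_apply, Fin.sum_univ_three,
          Matrix.vecHead, Matrix.vecTail]
      · show ((Q 1 * P 1).trace).re ≤ 1
        rw [hM11]
        simp [Matrix.trace_fin_three, Matrix.vecHead, Matrix.vecTail]
        norm_num [Complex.div_re]
      · show ((Q 2 * P 1).trace).re ≤ 1
        rw [hM21]
        simp [Matrix.trace_fin_three, Matrix.vecHead, Matrix.vecTail]
        norm_num [Complex.div_re]
      · show ((Q 0 * P 2).trace).re ≤ 1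
        rw [hQ0, hP2]
        simp [Matrix.trace_fin_three, Matrix.mul_apply, Fin.sum_univ_three,
          Matrix.vecHead, Matrix.vecTail]
      · show ((Q 1 * P 2).trace).re ≤ 1
        rw [hM12]
        simp [Matrix.trace_fin_three, Matrix.vecHead, Matrix.vecTail]
        norm_num [Complex.div_re]
      · show ((Q 2 * P 2).trace).re ≤ 1
        rw [hM22]
        simp [Matrix.trace_fin_three, Matrix.vecHead, Matrix.vecTail]
        norm_num [Complex.div_re]
    refine le_antisymm (ciSup_le hgle) ?_
    have := le_ciSup (Set.Finite.bddAbove (Set.finite_range g)) ((0, 0) : Fin 3 × Fin 3)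
    rw [hg00] at this
    exact this
end

section
/- If a tripartite density matrix ρ_{abc} is pure and H(w|c) = 0 for some orthonormal basis w of H_a, then H(w|b) = H(w|c) + S(a|b) reduces to H(w|b) = S(a|b); more specifically, for any basis w and pure ρ_{abc}, H(w|b) - H(w|c) = S(a|b), where H(w|b) = H(w) - χ(w,b), χ(w,b) = S(ρ_b) - Σ_j p_j S(ρ_{b,j}), and S(a|b) = S(ρ_{ab}) - S(ρ_b). -/
/-- The von Neumann entropy `S(A) = -∑ λᵢ log λᵢ` of a Hermitian matrix, via its
eigenvalues (junk value `0` for non-Hermitian matrices). -/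
noncomputable def vNEntropy {n : Type*} [Fintype n] [DecidableEq n]
    (A : Matrix n n ℂ) : ℝ :=
  if hA : A.IsHermitian then -∑ i, hA.eigenvalues i * Real.log (hA.eigenvalues i)
  else 0


open Matrix Polynomial

variable {m n : Type*} [Fintype m] [Fintype n] [DecidableEq m] [DecidableEq n]

lemma myEvalCharpoly {F : Type*} [CommRing F] (A : Matrix m m F) (t : F) :
    A.charpoly.eval t = det (t • (1 : Matrix m m F) - A) := by
  rw [Matrix.charpoly, ← Polynomial.coe_evalRingHom, RingHom.map_det]
  congr 1
  ext i j
  by_cases h : i = j <;>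
    simp [charmatrix_apply, Matrix.one_apply, h, Matrix.sub_apply, Matrix.smul_apply,
      Matrix.diagonal_apply]

lemma myDetKey {F : Type*} [Field F] (x : F) (hx : x ≠ 0) (M : Matrix m n F)
    (N : Matrix n m F) :
    x ^ Fintype.card n * det (x • (1 : Matrix m m F) - M * N)
      = x ^ Fintype.card m * det (x • (1 : Matrix n n F) - N * M) := by
  letI hinv : Invertible (x • (1 : Matrix m m F)) :=
    ⟨x⁻¹ • (1 : Matrix m m F),
      by rw [Matrix.smul_mul, Matrix.mul_smul, smul_smul, inv_mul_cancel₀ hx, one_smul, one_mul],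
      by rw [Matrix.smul_mul, Matrix.mul_smul, smul_smul, mul_inv_cancel₀ hx, one_smul, one_mul]⟩
  have h22 : (fromBlocks (x • (1 : Matrix m m F)) M N (1 : Matrix n n F)).det
      = det (x • (1 : Matrix m m F) - M * N) := by
    rw [det_fromBlocks_one₂₂]
  have h11 : (fromBlocks (x • (1 : Matrix m m F)) M N (1 : Matrix n n F)).det
      = x ^ Fintype.card m * det ((1 : Matrix n n F) - x⁻¹ • (N * M)) := by
    rw [det_fromBlocks₁₁]
    congr 1
    · rw [Matrix.det_smul, det_one, mul_one]
    · congr 1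
      have : ⅟ (x • (1 : Matrix m m F)) = x⁻¹ • (1 : Matrix m m F) := rfl
      rw [this, Matrix.mul_smul, Matrix.mul_one, Matrix.smul_mul]
  have hsm : x ^ Fintype.card n * det ((1 : Matrix n n F) - x⁻¹ • (N * M))
      = det (x • (1 : Matrix n n F) - N * M) := by
    rw [← Matrix.det_smul, smul_sub, smul_smul, mul_inv_cancel₀ hx, one_smul]
  calc x ^ Fintype.card n * det (x • (1 : Matrix m m F) - M * N)
      = x ^ Fintype.card n * (x ^ Fintype.card m * det ((1 : Matrix n n F) - x⁻¹ • (N * M))) := by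
        rw [← h22, h11]
    _ = x ^ Fintype.card m * (x ^ Fintype.card n * det ((1 : Matrix n n F) - x⁻¹ • (N * M))) := by
        ring
    _ = x ^ Fintype.card m * det (x • (1 : Matrix n n F) - N * M) := by rw [hsm]

lemma myCharpolyMulXPow {F : Type*} [Field F] [Infinite F] (M : Matrix m n F)
    (N : Matrix n m F) :
    (M * N).charpoly * X ^ Fintype.card n = (N * M).charpoly * X ^ Fintype.card m := by
  apply Polynomial.funext
  intro t
  simp only [eval_mul, eval_pow, eval_X, myEvalCharpoly]
  by_cases ht : t = 0
  · subst ht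
    by_cases hn : Nonempty n
    · by_cases hm : Nonempty m
      · rw [zero_pow Fintype.card_ne_zero, zero_pow Fintype.card_ne_zero, mul_zero, mul_zero]
      · rw [not_nonempty_iff] at hm
        have hNM : N * M = 0 := by
          ext i j
          simp [Matrix.mul_apply]
        rw [zero_pow (Fintype.card_ne_zero (α := n)), mul_zero, hNM, sub_zero, zero_smul,
          det_zero (n := n), zero_mul]
    · rw [not_nonempty_iff] at hn
      have hMN : M * N = 0 := by
        ext i j
        simp [Matrix.mul_apply, Finset.sum_of_isEmpty]
      rw [Fintype.card_eq_zero (α := n), pow_zero, mul_one, hMN, sub_zero, zero_smul]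
      by_cases hm : Nonempty m
      · rw [det_zero (n := m), zero_pow Fintype.card_ne_zero, mul_zero]
      · rw [not_nonempty_iff] at hm
        have : det (0 : Matrix m m F) = 1 := det_isEmpty
        have h2 : det ((0:F) • (1 : Matrix n n F) - N * M) = 1 := det_isEmpty
        rw [this, h2, Fintype.card_eq_zero (α := m), pow_zero, mul_one]
  · rw [mul_comm _ (t ^ Fintype.card n), mul_comm _ (t ^ Fintype.card m)]
    exact myDetKey t ht M N

lemma myCharpolyTranspose {F : Type*} [CommRing F] (A : Matrix m m F) :
    Aᵀ.charpoly = A.charpoly := by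
  rw [Matrix.charpoly, Matrix.charpoly, ← Matrix.det_transpose (charmatrix A)]
  congr 1
  ext i j
  by_cases h : i = j <;>
    simp [charmatrix_apply, Matrix.transpose_apply, Matrix.diagonal_apply, h, eq_comm]

lemma myCharpolyHermitian (A : Matrix m m ℂ) (hA : A.IsHermitian) :
    A.charpoly = ∏ i, (X - C ((hA.eigenvalues i : ℝ) : ℂ)) := by
  apply Polynomial.funext
  intro t
  rw [myEvalCharpoly]
  set U : Matrix m m ℂ := (Matrix.IsHermitian.eigenvectorUnitary hA : Matrix m m ℂ) with hU
  have hU1 : U * star U = 1 :=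
    Matrix.mem_unitaryGroup_iff.mp (Matrix.IsHermitian.eigenvectorUnitary hA).2
  have hD : t • (1 : Matrix m m ℂ) - A
      = U * (t • (1 : Matrix m m ℂ) - diagonal (RCLike.ofReal ∘ hA.eigenvalues)) * star U := by
    conv_lhs => rw [hA.spectral_theorem, Unitary.conjStarAlgAut_apply]
    rw [Matrix.mul_sub, Matrix.sub_mul, Matrix.mul_smul, Matrix.mul_one, Matrix.smul_mul, hU1]
  rw [hD, det_mul, det_mul]
  have : det U * det (t • (1 : Matrix m m ℂ) - diagonal (RCLike.ofReal ∘ hA.eigenvalues))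
      * det (star U) = (det U * det (star U))
        * det (t • (1 : Matrix m m ℂ) - diagonal (RCLike.ofReal ∘ hA.eigenvalues)) := by ring
  rw [this, ← det_mul, hU1, det_one, one_mul]
  have hdiag : t • (1 : Matrix m m ℂ) - diagonal (RCLike.ofReal ∘ hA.eigenvalues)
      = diagonal (fun i => t - ((hA.eigenvalues i : ℝ) : ℂ)) := by
    ext i j
    by_cases h : i = j <;>
      simp [Matrix.diagonal_apply, Matrix.one_apply, h, RCLike.ofReal_alg]
  rw [hdiag, det_diagonal, eval_prod]
  simp [eval_sub]

lemma myRootsSum (A : Matrix m m ℂ) (hA : A.IsHermitian) (k : ℕ) :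
    (((A.charpoly * X ^ k).roots).map (fun z : ℂ => z.re * Real.log z.re)).sum
      = ∑ i, hA.eigenvalues i * Real.log (hA.eigenvalues i) := by
  have hne : A.charpoly * X ^ k ≠ 0 :=
    ((A.charpoly_monic).mul (monic_X_pow k)).ne_zero
  rw [Polynomial.roots_mul hne, roots_pow, roots_X]
  have hroots : A.charpoly.roots
      = Finset.univ.val.map (fun i : m => ((hA.eigenvalues i : ℝ) : ℂ)) := by
    rw [myCharpolyHermitian A hA, Finset.prod_eq_multiset_prod]
    have h := roots_multiset_prod_X_sub_C
      (Finset.univ.val.map (fun i : m => ((hA.eigenvalues i : ℝ) : ℂ)))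
    rw [Multiset.map_map] at h
    simp only [Function.comp_def] at h
    exact h
  rw [hroots, Multiset.map_add, Multiset.sum_add, Multiset.map_nsmul, Multiset.map_singleton,
    Multiset.nsmul_singleton, Multiset.sum_replicate, Multiset.map_map]
  simp only [Function.comp, Complex.ofReal_re, Complex.zero_re, Real.log_zero, mul_zero,
    zero_mul, smul_zero, add_zero]
  rw [← Finset.sum_eq_multiset_sum]

lemma myVNEntropyDef (A : Matrix m m ℂ) (hA : A.IsHermitian) :
    (if h : A.IsHermitian then -∑ i, h.eigenvalues i * Real.log (h.eigenvalues i) else 0)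
      = -∑ i, hA.eigenvalues i * Real.log (hA.eigenvalues i) := dif_pos hA

lemma myEntropyEq (A : Matrix m m ℂ) (B : Matrix n n ℂ)
    (hA : A.IsHermitian) (hB : B.IsHermitian)
    (h : A.charpoly * X ^ Fintype.card n = B.charpoly * X ^ Fintype.card m) :
    (-∑ i, hA.eigenvalues i * Real.log (hA.eigenvalues i))
      = -∑ i, hB.eigenvalues i * Real.log (hB.eigenvalues i) := by
  have hA' := myRootsSum A hA (Fintype.card n)
  have hB' := myRootsSum B hB (Fintype.card m)
  rw [h] at hA'
  rw [hA'] at hB'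
  rw [hB']

lemma myTransposeKey (A : Matrix m n ℂ) :
    vNEntropy (A * Aᴴ) = vNEntropy (Aᵀ * Aᵀᴴ) := by
  have hA : (A * Aᴴ).IsHermitian := isHermitian_mul_conjTranspose_self A
  have hB : (Aᵀ * Aᵀᴴ).IsHermitian := isHermitian_mul_conjTranspose_self Aᵀ
  have h2 : (Aᵀ * Aᵀᴴ).charpoly = (Aᴴ * A).charpoly := by
    have e : (Aᵀ * Aᵀᴴ)ᵀ = Aᴴ * A := by
      ext i j
      simp [Matrix.mul_apply, Matrix.transpose_apply, Matrix.conjTranspose_apply, mul_comm]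
    rw [← e, myCharpolyTranspose]
  have hc : (A * Aᴴ).charpoly * X ^ Fintype.card n
      = (Aᵀ * Aᵀᴴ).charpoly * X ^ Fintype.card m := by
    rw [h2]
    exact myCharpolyMulXPow A Aᴴ
  unfold vNEntropy
  rw [dif_pos hA, dif_pos hB]
  exact myEntropyEq _ _ hA hB hc

lemma mySmulKey (r : ℝ) (hr : 0 ≤ r) (N : Matrix m n ℂ) :
    vNEntropy ((r : ℂ)⁻¹ • (N * Nᴴ)) = vNEntropy ((r : ℂ)⁻¹ • (Nᵀ * Nᵀᴴ)) := by
  set c : ℂ := (((Real.sqrt r)⁻¹ : ℝ) : ℂ) with hcdef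
  have hc : c * star c = (r : ℂ)⁻¹ := by
    rw [hcdef, RCLike.star_def, Complex.conj_ofReal, ← Complex.ofReal_mul, ← mul_inv,
      Real.mul_self_sqrt hr, Complex.ofReal_inv]
  have e1 : (c • N) * (c • N)ᴴ = (r : ℂ)⁻¹ • (N * Nᴴ) := by
    rw [conjTranspose_smul, Matrix.smul_mul, Matrix.mul_smul, smul_smul, hc]
  have e2 : (c • N)ᵀ * ((c • N)ᵀ)ᴴ = (r : ℂ)⁻¹ • (Nᵀ * Nᵀᴴ) := by
    rw [transpose_smul, conjTranspose_smul, Matrix.smul_mul, Matrix.mul_smul, smul_smul, hc]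
  rw [← e1, ← e2]
  exact myTransposeKey (c • N)


set_option maxHeartbeats 1000000 in
/-- For a pure tripartite state `Ψ` on `H_a ⊗ H_b ⊗ H_c` and an
orthonormal basis `w` of `H_a`, `H(w|b) - H(w|c) = S(a|b)`, where
`H(w|b) = H(w) - χ(w,b)`, `χ(w,b) = S(ρ_b) - ∑ j, p j * S(ρ_{b,j})` and
`S(a|b) = S(ρ_{ab}) - S(ρ_b)`.  In particular if `H(w|c) = 0` then
`H(w|b) = S(a|b)`. -/
theorem conditional_entropy_difference_pure_state (da db dc : ℕ)
    (Ψ : Fin da → Fin db → Fin dc → ℂ)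
    (hΨ : ∑ a, ∑ b, ∑ c, ‖Ψ a b c‖ ^ 2 = 1)
    (w : OrthonormalBasis (Fin da) ℂ (EuclideanSpace ℂ (Fin da)))
    (Ψw : Fin da → Fin db → Fin dc → ℂ)
    (hΨw : ∀ j b c, Ψw j b c = ∑ a, (starRingEnd ℂ) (w j a) * Ψ a b c)
    (p : Fin da → ℝ) (hp : ∀ j, p j = ∑ b, ∑ c, ‖Ψw j b c‖ ^ 2)
    (ρb : Matrix (Fin db) (Fin db) ℂ)
    (hρb : ∀ b b', ρb b b' = ∑ a, ∑ c, Ψ a b c * (starRingEnd ℂ) (Ψ a b' c))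
    (ρc : Matrix (Fin dc) (Fin dc) ℂ)
    (hρc : ∀ c c', ρc c c' = ∑ a, ∑ b, Ψ a b c * (starRingEnd ℂ) (Ψ a b c'))
    (ρab : Matrix (Fin da × Fin db) (Fin da × Fin db) ℂ)
    (hρab : ∀ a b a' b', ρab (a, b) (a', b') = ∑ c, Ψ a b c * (starRingEnd ℂ) (Ψ a' b' c))
    (σb : Fin da → Matrix (Fin db) (Fin db) ℂ)
    (hσb : ∀ j b b', σb j b b' = ∑ c, Ψw j b c * (starRingEnd ℂ) (Ψw j b' c))
    (σc : Fin da → Matrix (Fin dc) (Fin dc) ℂ)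
    (hσc : ∀ j c c', σc j c c' = ∑ b, Ψw j b c * (starRingEnd ℂ) (Ψw j b c'))
    (Hwb Hwc : ℝ)
    (hHwb : Hwb = (-∑ j, p j * Real.log (p j)) -
      (vNEntropy ρb - ∑ j, p j * vNEntropy (((p j : ℂ))⁻¹ • σb j)))
    (hHwc : Hwc = (-∑ j, p j * Real.log (p j)) -
      (vNEntropy ρc - ∑ j, p j * vNEntropy (((p j : ℂ))⁻¹ • σc j))) :
    Hwb - Hwc = vNEntropy ρab - vNEntropy ρb ∧
    (Hwc = 0 → Hwb = vNEntropy ρab - vNEntropy ρb) := by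
  set M : Matrix (Fin da × Fin db) (Fin dc) ℂ := Matrix.of (fun ab c => Ψ ab.1 ab.2 c) with hM
  have hρab' : ρab = M * Mᴴ := by
    ext ⟨a, b⟩ ⟨a', b'⟩
    rw [hρab]
    simp [Matrix.mul_apply, Matrix.conjTranspose_apply, hM, RCLike.star_def]
  have hρc' : ρc = Mᵀ * (Mᵀ)ᴴ := by
    ext c c'
    rw [hρc]
    simp [Matrix.mul_apply, Matrix.transpose_apply, Matrix.conjTranspose_apply, hM,
      RCLike.star_def, Fintype.sum_prod_type]
  have h1 : vNEntropy ρab = vNEntropy ρc := by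
    rw [hρab', hρc']
    exact myTransposeKey M
  have hσb' : ∀ j, σb j = Matrix.of (Ψw j) * (Matrix.of (Ψw j))ᴴ := by
    intro j
    ext b b'
    rw [hσb]
    simp [Matrix.mul_apply, Matrix.conjTranspose_apply, RCLike.star_def]
  have hσc' : ∀ j, σc j = (Matrix.of (Ψw j))ᵀ * ((Matrix.of (Ψw j))ᵀ)ᴴ := by
    intro j
    ext c c'
    rw [hσc]
    simp [Matrix.mul_apply, Matrix.transpose_apply, Matrix.conjTranspose_apply, RCLike.star_def]
  have h2 : ∀ j, p j * vNEntropy (((p j : ℂ))⁻¹ • σb j)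
      = p j * vNEntropy (((p j : ℂ))⁻¹ • σc j) := by
    intro j
    have hpj : 0 ≤ p j := by
      rw [hp]
      positivity
    rw [hσb' j, hσc' j, mySmulKey (p j) hpj (Matrix.of (Ψw j))]
  have hsum : ∑ j, p j * vNEntropy (((p j : ℂ))⁻¹ • σb j)
      = ∑ j, p j * vNEntropy (((p j : ℂ))⁻¹ • σc j) :=
    Finset.sum_congr rfl fun j _ => h2 j
  have main : Hwb - Hwc = vNEntropy ρab - vNEntropy ρb := by
    rw [hHwb, hHwc, h1]
    linarith [hsum]
  exact ⟨main, fun h0 => by linarith [main]⟩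
end
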